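/- arXiv:2010.04478 — 11 statements merged into one kernel-verified Lean document; each statement's English description precedes it below -/
import Mathlib

section
/- There exists a set D ⊆ ℂ that is closed and discrete (i.e., has no accumulation point in ℂ) such that for every z ∈ ℂ \ D and every continuous function f : [0,L] → ℂ there exists a unique three-times continuously differentiable function v : [0,L] → ℂ satisfying v'''(x) + v'(x) + z·v(x) = f(x) for all x ∈ [0,L] together with the boundary conditions v(0) = v(L) = v'(L) = 0. (This expresses that the spectrum of the operator A v = v''' + v' with domain {v ∈ H³(0,L) : v(0)=v(L)=v'(L)=0} is discrete.) -/
/-!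
Writing `Y = (v, v', v'')`, the equation `v''' + v' + z v = f` becomes the first-order system
`Y' = A(z) Y + (0, 0, f)` with a companion matrix `A(z)` that is affine in `z`, solved by
variation of constants with the fundamental solution `exp (x A(z))`. Given `v(0) = 0`, the free
initial data `(v'(0), v''(0))` are determined by the two remaining boundary conditions through a
`2 × 2` linear system whose matrix `M(z)` is built from `exp (L A(z))`; the problem is uniquely
solvable whenever `det M(z) ≠ 0`. This determinant is an entire function of `z`, and it does not
vanish for `Re z > 0`: there the energy `Re (u'' ū) - |u'|²/2 + |u|²/2` of a homogeneous solution
decreases with derivative `-(Re z)|u|²`, which forces the solution to vanish. Hence its zero set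
`D` is closed and discrete.
-/

open Set NormedSpace
open scoped Matrix

noncomputable section

theorem contDiffOn_succ_of_hasDerivWithinAt {𝕜 F : Type*} [NontriviallyNormedField 𝕜]
    [NormedAddCommGroup F] [NormedSpace 𝕜 F] {s : Set 𝕜} {g g' : 𝕜 → F} {n : ℕ}
    (hs : UniqueDiffOn 𝕜 s) (hg : ∀ x ∈ s, HasDerivWithinAt g (g' x) s x)
    (hg' : ContDiffOn 𝕜 n g' s) : ContDiffOn 𝕜 (n + 1) g s := by
  rw [contDiffOn_succ_iff_derivWithin hs]
  exact ⟨fun x hx => (hg x hx).differentiableWithinAt, by simp,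
    hg'.congr fun x hx => (hg x hx).derivWithin (hs x hx)⟩

theorem HasDerivAt.eq_zero_of_forall_mem_Ioo_eq {F : Type*} [NormedAddCommGroup F]
    [NormedSpace ℝ F] {g : ℝ → F} {g' c : F} {a b x : ℝ} (hg : HasDerivAt g g' x)
    (h : ∀ y ∈ Ioo a b, g y = c) (hx : x ∈ Ioo a b) : g' = 0 :=
  hg.unique <| (hasDerivAt_const x c).congr_of_eventuallyEq <|
    Filter.eventually_of_mem (Ioo_mem_nhds hx.1 hx.2) h

theorem Differentiable.isClosed_setOf_eq_zero_and_discreteTopology {g : ℂ → ℂ}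
    (hg : Differentiable ℂ g) {w : ℂ} (hw : g w ≠ 0) :
    IsClosed {z | g z = 0} ∧ DiscreteTopology {z | g z = 0} := by
  have h := (AnalyticOnNhd.eqOn_zero_or_eventually_ne_zero_of_preconnected
    (fun z _ => hg.analyticAt z) isPreconnected_univ).resolve_left fun h => hw (h (mem_univ w))
  obtain ⟨hclosed, hdiscrete⟩ := compl_mem_codiscrete_iff.1 h
  exact ⟨hclosed, isDiscrete_iff_discreteTopology.1 hdiscrete⟩

section LinearFlow

variable {E : Type*} [NormedAddCommGroup E] [NormedSpace ℂ E] [CompleteSpace E] (A : E →L[ℂ] E)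

theorem exp_smul_apply_exp_smul_neg_apply (t : ℂ) (v : E) :
    exp (t • A) (exp (t • -A) v) = v := by
  rw [← mul_apply_eq_comp, ← exp_add_of_commute_of_mem_ball (𝕂 := ℂ)
    (((Commute.refl A).neg_right.smul_left t).smul_right t)
    (by simp [expSeries_radius_eq_top]) (by simp [expSeries_radius_eq_top]), smul_neg,
    add_neg_cancel, exp_zero, one_apply_eq_self]

variable [NormedSpace ℝ E] [IsScalarTower ℝ ℂ E]

theorem hasDerivWithinAt_exp_smul_apply {u : ℝ → E} {u' : E} {s : Set ℝ} {x : ℝ}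
    (hu : HasDerivWithinAt u u' s x) :
    HasDerivWithinAt (fun t : ℝ => exp ((t : ℂ) • A) (u t))
      (A (exp ((x : ℂ) • A) (u x)) + exp ((x : ℂ) • A) u') s x := by
  have hexp : HasDerivAt (fun t : ℝ => exp ((t : ℂ) • A)) (A * exp ((x : ℂ) • A)) x := by
    have h := (hasDerivAt_exp_smul_const' A (x : ℂ)).scomp x Complex.ofRealCLM.hasDerivAt
    simp only [Complex.ofRealCLM_apply, Complex.ofReal_one, one_smul, Function.comp_def] at h
    exact h
  have h := (ContinuousLinearMap.restrictScalarsL ℂ E E ℝ ℝ).hasFDerivAt.comp_hasDerivAt x hexp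
  simpa using h.hasDerivWithinAt.clm_apply hu

theorem hasDerivAt_exp_smul_apply (a : E) (x : ℝ) :
    HasDerivAt (fun t : ℝ => exp ((t : ℂ) • A) a) (A (exp ((x : ℂ) • A) a)) x := by
  simpa using hasDerivWithinAt_univ.1
    (hasDerivWithinAt_exp_smul_apply A (hasDerivWithinAt_const x univ a))

theorem eqOn_exp_smul_apply_of_hasDerivWithinAt {Y : ℝ → E} {b : ℝ}
    (hY : ∀ x ∈ Icc 0 b, HasDerivWithinAt Y (A (Y x)) (Icc 0 b) x) :
    EqOn Y (fun x => exp ((x : ℂ) • A) (Y 0)) (Icc 0 b) :=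
  ODE_solution_unique_of_mem_Icc_right (v := fun _ => A) (s := fun _ => univ) (K := ‖A‖₊)
    (fun _ _ => A.lipschitz.lipschitzOnWith) (fun x hx => (hY x hx).continuousWithinAt)
    (fun x hx => (hY x (Ico_subset_Icc_self hx)).mono_of_mem_nhdsWithin
      (Icc_mem_nhdsGE_of_mem hx))
    (fun _ _ => mem_univ _)
    (continuous_iff_continuousAt.2 fun x =>
      (hasDerivAt_exp_smul_apply A _ x).continuousAt).continuousOn
    (fun x _ => (hasDerivAt_exp_smul_apply A _ x).hasDerivWithinAt) (fun _ _ => mem_univ _)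
    (by simp)

theorem exists_hasDerivWithinAt_apply_add {F : ℝ → E} {b : ℝ} (hF : ContinuousOn F (Icc 0 b)) :
    ∃ V : ℝ → E, V 0 = 0 ∧ ∀ x ∈ Icc 0 b, HasDerivWithinAt V (A (V x) + F x) (Icc 0 b) x := by
  set h : ℝ → E := fun s => exp ((s : ℂ) • -A) (F s)
  have hh : ContinuousOn h (Icc 0 b) :=
    (((ContinuousLinearMap.restrictScalarsL ℂ E E ℝ ℝ).continuous.comp
      ((differentiable_exp_smul_const ℂ (-A)).continuous.comp
        Complex.continuous_ofReal)).continuousOn).clm_apply hF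
  refine ⟨fun t => exp ((t : ℂ) • A) (∫ s in 0..t, h s), by simp, fun x hx => ?_⟩
  have : Fact (x ∈ Icc 0 b) := ⟨hx⟩
  have hint := intervalIntegral.integral_hasDerivWithinAt_right (s := Icc 0 b)
    ((hh.mono (Icc_subset_Icc_right hx.2)).intervalIntegrable_of_Icc hx.1)
    (hh.stronglyMeasurableAtFilter_nhdsWithin measurableSet_Icc x) (hh x hx)
  simpa only [h, exp_smul_apply_exp_smul_neg_apply] using hasDerivWithinAt_exp_smul_apply A hint

end LinearFlow

/-- Written affinely in `z`, so that holomorphy in `z` is immediate. -/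
def companion (z : ℂ) : (Fin 3 → ℂ) →L[ℂ] (Fin 3 → ℂ) :=
  (Matrix.toLin' !![0, 1, 0; 0, 0, 1; 0, -1, 0]).toContinuousLinearMap +
    z • (Matrix.toLin' !![0, 0, 0; 0, 0, 0; -1, 0, 0]).toContinuousLinearMap

theorem companion_apply (z : ℂ) (w : Fin 3 → ℂ) :
    companion z w = ![w 1, w 2, -w 1 - z * w 0] := by
  ext i
  fin_cases i <;> simp [companion, Matrix.vecHead, Matrix.vecTail, sub_eq_add_neg]

theorem companion_apply_add_smul_single (z c : ℂ) (w : Fin 3 → ℂ) :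
    companion z w + c • Pi.single 2 1 = ![w 1, w 2, -w 1 - z * w 0 + c] := by
  ext i
  fin_cases i <;> simp [companion_apply]

def jet (L : ℝ) (v : ℝ → ℂ) (x : ℝ) : Fin 3 → ℂ :=
  ![v x, derivWithin v (Icc 0 L) x, derivWithin (derivWithin v (Icc 0 L)) (Icc 0 L) x]

def linearKdV (L : ℝ) (z : ℂ) (v : ℝ → ℂ) (x : ℝ) : ℂ :=
  derivWithin (derivWithin (derivWithin v (Icc 0 L)) (Icc 0 L)) (Icc 0 L) x
    + derivWithin v (Icc 0 L) x + z * v x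

def SolvesBVP (L : ℝ) (z : ℂ) (f v : ℝ → ℂ) : Prop :=
  ContDiffOn ℝ 3 v (Icc 0 L) ∧ (∀ x ∈ Icc 0 L, linearKdV L z v x = f x) ∧
    v 0 = 0 ∧ v L = 0 ∧ derivWithin v (Icc 0 L) L = 0

theorem hasDerivWithinAt_jet {L : ℝ} (hL : 0 < L) {z : ℂ} {f v : ℝ → ℂ}
    (hv : ContDiffOn ℝ 3 v (Icc 0 L)) (hode : ∀ x ∈ Icc 0 L, linearKdV L z v x = f x)
    {x : ℝ} (hx : x ∈ Icc 0 L) :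
    HasDerivWithinAt (jet L v) (companion z (jet L v x) + f x • Pi.single 2 1) (Icc 0 L) x := by
  have hs := uniqueDiffOn_Icc hL
  have hv' : ContDiffOn ℝ 2 (derivWithin v (Icc 0 L)) (Icc 0 L) := hv.derivWithin hs (by norm_num)
  have hv'' := hv'.derivWithin hs (m := 1) (by norm_num)
  rw [companion_apply_add_smul_single]
  refine hasDerivWithinAt_pi.2 fun i => ?_
  fin_cases i
  · exact (hv.differentiableOn (by norm_num) x hx).hasDerivWithinAt
  · exact (hv'.differentiableOn (by norm_num) x hx).hasDerivWithinAt
  · have h3 : derivWithin (derivWithin (derivWithin v (Icc 0 L)) (Icc 0 L)) (Icc 0 L) x =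
        -derivWithin v (Icc 0 L) x - z * v x + f x := by
      rw [← hode x hx, linearKdV]
      ring
    simpa [jet, h3] using (hv''.differentiableOn one_ne_zero x hx).hasDerivWithinAt

theorem solution_of_hasDerivWithinAt_companion {L : ℝ} (hL : 0 < L) {z : ℂ} {f : ℝ → ℂ}
    (hf : ContinuousOn f (Icc 0 L)) {V : ℝ → Fin 3 → ℂ}
    (hV : ∀ x ∈ Icc 0 L,
      HasDerivWithinAt V (companion z (V x) + f x • Pi.single 2 1) (Icc 0 L) x) :
    ContDiffOn ℝ 3 (fun x => V x 0) (Icc 0 L) ∧ EqOn (jet L fun x => V x 0) V (Icc 0 L) ∧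
      ∀ x ∈ Icc 0 L, linearKdV L z (fun x => V x 0) x = f x := by
  have hs := uniqueDiffOn_Icc hL
  have hVi : ∀ i, ∀ x ∈ Icc 0 L, HasDerivWithinAt (fun y => V y i)
      (![V x 1, V x 2, -V x 1 - z * V x 0 + f x] i) (Icc 0 L) x := fun i x hx => by
    simpa only [companion_apply_add_smul_single] using hasDerivWithinAt_pi.1 (hV x hx) i
  have hcont : ∀ i, ContinuousOn (fun y => V y i) (Icc 0 L) := fun i x hx =>
    (hVi i x hx).continuousWithinAt
  have h₂ : ContDiffOn ℝ (0 + 1) (fun y => V y 2) (Icc 0 L) :=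
    contDiffOn_succ_of_hasDerivWithinAt hs (hVi 2) <| contDiffOn_zero.2 <|
      ((hcont 1).neg.sub (continuousOn_const.mul (hcont 0))).add hf
  have h₁ : ContDiffOn ℝ (1 + 1) (fun y => V y 1) (Icc 0 L) :=
    contDiffOn_succ_of_hasDerivWithinAt hs (hVi 1) h₂
  have d₀ : EqOn (derivWithin (fun y => V y 0) (Icc 0 L)) (fun y => V y 1) (Icc 0 L) :=
    fun x hx => (hVi 0 x hx).derivWithin (hs x hx)
  have d₁ : EqOn (derivWithin (derivWithin (fun y => V y 0) (Icc 0 L)) (Icc 0 L))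
      (fun y => V y 2) (Icc 0 L) := fun x hx => by
    rw [derivWithin_congr d₀ (d₀ hx)]
    exact (hVi 1 x hx).derivWithin (hs x hx)
  refine ⟨contDiffOn_succ_of_hasDerivWithinAt hs (hVi 0) h₁, fun x hx => ?_, fun x hx => ?_⟩
  · ext i
    fin_cases i
    exacts [rfl, d₀ hx, d₁ hx]
  · rw [linearKdV, derivWithin_congr d₁ (d₁ hx), (hVi 2 x hx).derivWithin (hs x hx), d₀ hx]
    simp only [Matrix.cons_val]
    ring

/-- Maps the initial data `(v'(0), v''(0))` of a homogeneous solution with `v(0) = 0`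
to `(v(L), v'(L))`. -/
def boundaryMatrix (L : ℝ) (z : ℂ) : Matrix (Fin 2) (Fin 2) ℂ :=
  Matrix.of fun i j => exp ((L : ℂ) • companion z) (Pi.single j.succ 1) i.castSucc

theorem boundaryMatrix_mulVec (L : ℝ) (z : ℂ) (c : Fin 2 → ℂ) :
    boundaryMatrix L z *ᵥ c = ![exp ((L : ℂ) • companion z) ![0, c 0, c 1] 0,
      exp ((L : ℂ) • companion z) ![0, c 0, c 1] 1] := by
  have hc : (![0, c 0, c 1] : Fin 3 → ℂ) = c 0 • Pi.single 1 1 + c 1 • Pi.single 2 1 := by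
    ext i; fin_cases i <;> simp
  ext i
  fin_cases i <;> simp [boundaryMatrix, Matrix.mulVec, dotProduct, Fin.sum_univ_two, hc, mul_comm]

theorem eqOn_zero_of_hasDerivWithinAt_companion {L : ℝ} (hL : 0 ≤ L) {z : ℂ}
    (hdet : (boundaryMatrix L z).det ≠ 0) {Y : ℝ → Fin 3 → ℂ}
    (hY : ∀ x ∈ Icc 0 L, HasDerivWithinAt Y (companion z (Y x)) (Icc 0 L) x)
    (h0 : Y 0 0 = 0) (hL0 : Y L 0 = 0) (hL1 : Y L 1 = 0) : EqOn Y 0 (Icc 0 L) := by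
  have hflow := eqOn_exp_smul_apply_of_hasDerivWithinAt (companion z) hY
  have hY0 : Y 0 = ![0, Y 0 1, Y 0 2] := by
    ext i; fin_cases i <;> simp [h0]
  have hc : ![Y 0 1, Y 0 2] = 0 := by
    by_contra hc
    refine hdet (Matrix.exists_mulVec_eq_zero_iff.1 ⟨_, hc, ?_⟩)
    rw [boundaryMatrix_mulVec]
    simp only [Matrix.cons_val_zero, Matrix.cons_val_one, ← hY0, ← hflow ⟨hL, le_rfl⟩, hL0, hL1]
    ext i; fin_cases i <;> rfl
  have hY00 : Y 0 = 0 := by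
    ext i; fin_cases i
    exacts [h0, congrFun hc 0, congrFun hc 1]
  intro x hx
  simpa [hY00] using hflow hx

theorem SolvesBVP.eqOn {L : ℝ} (hL : 0 < L) {z : ℂ} (hdet : (boundaryMatrix L z).det ≠ 0)
    {f v w : ℝ → ℂ} (hv : SolvesBVP L z f v) (hw : SolvesBVP L z f w) : EqOn v w (Icc 0 L) := by
  obtain ⟨hv, hvode, hv0, hvL, hv'L⟩ := hv
  obtain ⟨hw, hwode, hw0, hwL, hw'L⟩ := hw
  have hY : ∀ x ∈ Icc 0 L, HasDerivWithinAt (jet L v - jet L w)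
      (companion z ((jet L v - jet L w) x)) (Icc 0 L) x := fun x hx => by
    simpa using (hasDerivWithinAt_jet hL hv hvode hx).sub (hasDerivWithinAt_jet hL hw hwode hx)
  have hzero := eqOn_zero_of_hasDerivWithinAt_companion hL.le hdet hY
    (by simp [jet, hv0, hw0]) (by simp [jet, hvL, hwL]) (by simp [jet, hv'L, hw'L])
  intro x hx
  simpa [jet, sub_eq_zero] using congrFun (hzero hx) 0

theorem exists_solvesBVP {L : ℝ} (hL : 0 < L) {z : ℂ} (hdet : (boundaryMatrix L z).det ≠ 0)
    {f : ℝ → ℂ} (hf : ContinuousOn f (Icc 0 L)) : ∃ v, SolvesBVP L z f v := by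
  obtain ⟨V₀, hV₀0, hV₀⟩ := exists_hasDerivWithinAt_apply_add (companion z)
    (F := fun x => f x • Pi.single 2 1) (hf.smul continuousOn_const)
  obtain ⟨c, hc⟩ := Matrix.mulVec_surjective_iff_isUnit.2
    ((Matrix.isUnit_iff_isUnit_det _).2 hdet.isUnit) (-![V₀ L 0, V₀ L 1])
  have hc₀ := congrFun hc 0
  have hc₁ := congrFun hc 1
  simp only [boundaryMatrix_mulVec, Matrix.cons_val_zero, Matrix.cons_val_one, Pi.neg_apply]
    at hc₀ hc₁
  set V : ℝ → Fin 3 → ℂ := fun t => V₀ t + exp ((t : ℂ) • companion z) ![0, c 0, c 1]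
  have hV : ∀ x ∈ Icc 0 L,
      HasDerivWithinAt V (companion z (V x) + f x • Pi.single 2 1) (Icc 0 L) x := fun x hx => by
    refine ((hV₀ x hx).add
      (hasDerivAt_exp_smul_apply (companion z) ![0, c 0, c 1] x).hasDerivWithinAt).congr_deriv ?_
    simp only [V, map_add]
    abel
  obtain ⟨hcd, hjet, hode⟩ := solution_of_hasDerivWithinAt_companion hL hf hV
  refine ⟨_, hcd, hode, ?_, ?_, ?_⟩
  · simp [V, hV₀0, zero_smul ℂ (companion z)]
  · simp [V, hc₀]
  · refine (congrFun (hjet ⟨hL.le, le_rfl⟩) 1).trans ?_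
    simp [V, hc₁]

theorem initial_derivs_eq_zero_of_re_pos {z : ℂ} (hz : 0 < z.re) {L : ℝ} (hL : 0 < L)
    {u u₁ u₂ : ℝ → ℂ} (hu : ∀ x, HasDerivAt u (u₁ x) x) (hu₁ : ∀ x, HasDerivAt u₁ (u₂ x) x)
    (hu₂ : ∀ x, HasDerivAt u₂ (-u₁ x - z * u x) x)
    (h0 : u 0 = 0) (hL0 : u L = 0) (hL1 : u₁ L = 0) : u₁ 0 = 0 ∧ u₂ 0 = 0 := by
  set G : ℝ → ℝ := fun x => inner ℝ (u₂ x) (u x) - ‖u₁ x‖ ^ 2 / 2 + ‖u x‖ ^ 2 / 2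
  have hG : ∀ x, HasDerivAt G (-(z.re * ‖u x‖ ^ 2)) x := fun x => by
    refine ((((hu₂ x).inner ℝ (hu x)).sub ((hu₁ x).norm_sq.div_const 2)).add
      ((hu x).norm_sq.div_const 2)).congr_deriv ?_
    simp only [Complex.inner, Complex.sq_norm, Complex.normSq_apply, Complex.mul_re,
      Complex.sub_re, Complex.neg_re, Complex.conj_re, Complex.conj_im, Complex.mul_im,
      Complex.sub_im, Complex.neg_im]
    ring
  have hanti : Antitone G := antitone_of_deriv_nonpos (fun x => (hG x).differentiableAt)
    fun x => by rw [(hG x).deriv]; have := sq_nonneg ‖u x‖; nlinarith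
  have hG0 : G 0 = -(‖u₁ 0‖ ^ 2 / 2) := by simp [G, h0]
  have hGL : G L = 0 := by simp [G, hL0, hL1]
  have hGx : ∀ x ∈ Icc 0 L, G x = 0 := fun x hx => by
    have := hanti hx.1
    have := hanti hx.2
    nlinarith [sq_nonneg ‖u₁ 0‖]
  have hu₁0 : u₁ 0 = 0 := by
    have := hGx 0 (left_mem_Icc.2 hL.le)
    rw [hG0] at this
    simpa using this
  have huIoo : ∀ x ∈ Ioo 0 L, u x = 0 := fun x hx => by
    have := (hG x).eq_zero_of_forall_mem_Ioo_eq (fun y hy => hGx y (Ioo_subset_Icc_self hy)) hx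
    simpa [hz.ne'] using this
  have hu₁Ioo : ∀ x ∈ Ioo 0 L, u₁ x = 0 := fun x hx => (hu x).eq_zero_of_forall_mem_Ioo_eq huIoo hx
  have hu₂Ioo : EqOn u₂ 0 (Ioo 0 L) := fun x hx => (hu₁ x).eq_zero_of_forall_mem_Ioo_eq hu₁Ioo hx
  have hu₂cont : Continuous u₂ := continuous_iff_continuousAt.2 fun x => (hu₂ x).continuousAt
  have := hu₂Ioo.closure hu₂cont continuous_const
  rw [closure_Ioo hL.ne] at this
  exact ⟨hu₁0, this (left_mem_Icc.2 hL.le)⟩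

theorem det_boundaryMatrix_ne_zero {L : ℝ} (hL : 0 < L) {z : ℂ} (hz : 0 < z.re) :
    (boundaryMatrix L z).det ≠ 0 := by
  intro hdet
  obtain ⟨c, hc, hMc⟩ := Matrix.exists_mulVec_eq_zero_iff.2 hdet
  have hMc₀ := congrFun hMc 0
  have hMc₁ := congrFun hMc 1
  simp only [boundaryMatrix_mulVec, Matrix.cons_val_zero, Matrix.cons_val_one, Pi.zero_apply]
    at hMc₀ hMc₁
  have hY : ∀ (x : ℝ) i, HasDerivAt (fun t : ℝ => exp ((t : ℂ) • companion z) ![0, c 0, c 1] i)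
      (companion z (exp ((x : ℂ) • companion z) ![0, c 0, c 1]) i) x := fun x i =>
    hasDerivAt_pi.1 (hasDerivAt_exp_smul_apply (companion z) _ x) i
  simp only [companion_apply] at hY
  have h := initial_derivs_eq_zero_of_re_pos hz hL (hY · 0) (hY · 1) (hY · 2)
    (by simp [zero_smul ℂ (companion z)]) hMc₀ hMc₁
  simp only [Complex.ofReal_zero, zero_smul ℂ (companion z), exp_zero] at h
  refine hc ?_
  ext i
  fin_cases i
  exacts [h.1, h.2]

theorem differentiable_det_boundaryMatrix (L : ℝ) :
    Differentiable ℂ fun z => (boundaryMatrix L z).det := by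
  have hexp : Differentiable ℂ fun z => exp ((L : ℂ) • companion z) := fun z =>
    (exp_analytic _).differentiableAt.comp z
      (((differentiable_const _).add (differentiable_id.smul_const _)).const_smul (L : ℂ) z)
  have hentry : ∀ i j, Differentiable ℂ fun z => boundaryMatrix L z i j := fun i j =>
    differentiable_pi.1 (hexp.clm_apply (differentiable_const _)) i.castSucc
  simp only [Matrix.det_fin_two]
  exact ((hentry 0 0).mul (hentry 1 1)).sub ((hentry 0 1).mul (hentry 1 0))

end

theorem stmt0 (L : ℝ) (hL : 0 < L) :
    ∃ D : Set ℂ, IsClosed D ∧ DiscreteTopology ↥D ∧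
      ∀ z : ℂ, z ∉ D → ∀ f : ℝ → ℂ, ContinuousOn f (Icc 0 L) →
        (∃ v : ℝ → ℂ,
          ContDiffOn ℝ 3 v (Icc 0 L) ∧
          (∀ x ∈ Icc 0 L,
            derivWithin (derivWithin (derivWithin v (Icc 0 L)) (Icc 0 L)) (Icc 0 L) x
              + derivWithin v (Icc 0 L) x + z * v x = f x) ∧
          v 0 = 0 ∧ v L = 0 ∧ derivWithin v (Icc 0 L) L = 0) ∧
        (∀ v w : ℝ → ℂ,
          (ContDiffOn ℝ 3 v (Icc 0 L) ∧
            (∀ x ∈ Icc 0 L,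
              derivWithin (derivWithin (derivWithin v (Icc 0 L)) (Icc 0 L)) (Icc 0 L) x
                + derivWithin v (Icc 0 L) x + z * v x = f x) ∧
            v 0 = 0 ∧ v L = 0 ∧ derivWithin v (Icc 0 L) L = 0) →
          (ContDiffOn ℝ 3 w (Icc 0 L) ∧
            (∀ x ∈ Icc 0 L,
              derivWithin (derivWithin (derivWithin w (Icc 0 L)) (Icc 0 L)) (Icc 0 L) x
                + derivWithin w (Icc 0 L) x + z * w x = f x) ∧
            w 0 = 0 ∧ w L = 0 ∧ derivWithin w (Icc 0 L) L = 0) →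
          EqOn v w (Icc 0 L)) := by
  obtain ⟨hclosed, hdiscrete⟩ :=
    (differentiable_det_boundaryMatrix L).isClosed_setOf_eq_zero_and_discreteTopology
      (det_boundaryMatrix_ne_zero hL (z := 1) (by norm_num))
  exact ⟨_, hclosed, hdiscrete, fun z hz f hf =>
    ⟨exists_solvesBVP hL hz hf, fun v w hv hw => SolvesBVP.eqOn hL hz hv hw⟩⟩
end

section
/- Let L > 0 and let U : [0,L] → ℝ be three-times continuously differentiable with U'''(x) + U'(x) + U(x) = 0 for all x ∈ [0,L], and U(0) = U(L) = U'(L) = 0. Then U is identically zero on [0,L]. (Consequently the solution of the Cauchy problem U''' + U' + U = 0, U(L) = U'(L) = 0, U''(L) = 1 satisfies U(0) ≠ 0.) -/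
/-!
The energy `G = U U'' - U'²/2 + U²/2` satisfies `G' = U (U''' + U') = -U²` along solutions, so
it is nonincreasing on `[0, L]`. The boundary conditions give `G L = 0 ≥ -U'(0)²/2 = G 0`, so `G`
is constant and hence `U² = -G' = 0`.
-/

open Set

theorem eq_zero_of_hasDerivWithinAt_Icc_of_nonpos_of_le {f f' : ℝ → ℝ} {a b : ℝ} (hab : a < b)
    (hf : ∀ x ∈ Icc a b, HasDerivWithinAt f (f' x) (Icc a b) x)
    (hf' : ∀ x ∈ Icc a b, f' x ≤ 0) (hle : f a ≤ f b) :
    ∀ x ∈ Icc a b, f' x = 0 := by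
  have hanti : AntitoneOn f (Icc a b) :=
    antitoneOn_of_hasDerivWithinAt_nonpos (convex_Icc a b)
      (fun x hx => (hf x hx).continuousWithinAt)
      (fun x hx => (hf x (interior_subset hx)).mono interior_subset)
      (fun x hx => hf' x (interior_subset hx))
  have hconst : ∀ x ∈ Icc a b, f x = f a := fun x hx =>
    le_antisymm (hanti (left_mem_Icc.2 hab.le) hx hx.1)
      (hle.trans (hanti hx (right_mem_Icc.2 hab.le) hx.2))
  intro x hx
  have hzero : HasDerivWithinAt f 0 (Icc a b) x :=
    (hasDerivWithinAt_const x _ (f a)).congr hconst (hconst x hx)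
  exact (uniqueDiffOn_Icc hab x hx).eq_deriv _ (hf x hx) hzero

noncomputable def energy (U U₁ U₂ : ℝ → ℝ) (x : ℝ) : ℝ :=
  U x * U₂ x - U₁ x ^ 2 / 2 + U x ^ 2 / 2

theorem hasDerivWithinAt_energy {U U₁ U₂ : ℝ → ℝ} {s : Set ℝ} {x v : ℝ}
    (hU : HasDerivWithinAt U (U₁ x) s x) (hU₁ : HasDerivWithinAt U₁ (U₂ x) s x)
    (hU₂ : HasDerivWithinAt U₂ v s x) :
    HasDerivWithinAt (energy U U₁ U₂) (U x * (v + U₁ x)) s x := by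
  have h := ((hU.mul hU₂).sub ((hU₁.pow 2).div_const 2)).add ((hU.pow 2).div_const 2)
  exact h.congr_deriv (by norm_num; ring)

theorem stmt1 (L : ℝ) (hL : 0 < L) (U : ℝ → ℝ)
    (hU : ContDiffOn ℝ 3 U (Icc 0 L))
    (hode : ∀ x ∈ Icc 0 L,
      derivWithin (derivWithin (derivWithin U (Icc 0 L)) (Icc 0 L)) (Icc 0 L) x
        + derivWithin U (Icc 0 L) x + U x = 0)
    (h0 : U 0 = 0) (hL0 : U L = 0)
    (hL1 : derivWithin U (Icc 0 L) L = 0) :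
    ∀ x ∈ Icc 0 L, U x = 0 := by
  set s := Icc 0 L
  set U₁ := derivWithin U s
  set U₂ := derivWithin U₁ s
  have hs : UniqueDiffOn ℝ s := uniqueDiffOn_Icc hL
  have hU₁ : ContDiffOn ℝ 2 U₁ s := hU.derivWithin hs (by norm_num)
  have hU₂ : ContDiffOn ℝ 1 U₂ s := hU₁.derivWithin hs (by norm_num)
  have hG : ∀ x ∈ s, HasDerivWithinAt (energy U U₁ U₂) (-U x ^ 2) s x := fun x hx => by
    have h := hasDerivWithinAt_energy ((hU.differentiableOn (by norm_num)) x hx).hasDerivWithinAt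
      ((hU₁.differentiableOn (by norm_num)) x hx).hasDerivWithinAt
      ((hU₂.differentiableOn one_ne_zero) x hx).hasDerivWithinAt
    exact h.congr_deriv (by linear_combination U x * hode x hx)
  have hG0L : energy U U₁ U₂ 0 ≤ energy U U₁ U₂ L := by
    simp only [energy, h0, hL0, hL1, U₁]
    nlinarith [sq_nonneg (U₁ 0)]
  intro x hx
  have hx0 := eq_zero_of_hasDerivWithinAt_Icc_of_nonpos_of_le hL hG
    (fun y _ => neg_nonpos.2 (sq_nonneg (U y))) hG0L x hx
  simpa using hx0
end

section
/- For each j ∈ {0,1} there exists a constant C > 0 such that for every z ∈ ℝ one has ∑_{n ∈ ℤ, n ≠ 0} |n|^j / (|z + 4n − n³| + n²) ≤ C · ln(|z| + 2) / (|z| + 2)^{(2−j)/3}. -/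
/-!
By the symmetry `n ↦ -n`, `z ↦ -z` it suffices to sum over `n = m > 0`, where the summand is
`m ^ j / (|z - x m| + m ^ 2)` with `x m = m ^ 3 - 4 * m`. Put `A = (|z| + 2) ^ (1 / 3)`.
For `m ≥ 3 A` the denominator is at least `m ^ 3 / 2`, so this tail is `O(A ^ (j - 2))`.
For `m < 3 A` we have `m ^ j ≤ (3 A) ^ j`, which reduces everything to `j = 0` with the bound
`O(log A / A ^ 2)`. If `4 m ≤ A`, then `x m` is far below `|z|` and each of the at most `A / 4`
terms is `O(A ^ (-3))`. If `4 m > A`, the factorisation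
`x m - x m' = (m ^ 2 + m m' + m' ^ 2 - 4) (m - m')` shows that the points `x m` are
`A ^ 2 / 16`-separated; measured from the point closest to `z`, the `k`-th one is at distance
`≳ k A ^ 2`, and the harmonic sum over `k < 3 A` yields the logarithm.
-/

open Real Finset

theorem sum_inv_le_one_add_log_of_injOn {ι : Type*} {s : Finset ι} {f : ι → ℕ} {K : ℕ}
    (hf : Set.InjOn f s) (hmaps : ∀ i ∈ s, f i ∈ Icc 1 K) :
    ∑ i ∈ s, ((f i : ℝ))⁻¹ ≤ 1 + log K := by
  classical
  calc ∑ i ∈ s, ((f i : ℝ))⁻¹ = ∑ k ∈ s.image f, ((k : ℝ))⁻¹ :=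
        (sum_image (f := fun k : ℕ => ((k : ℝ))⁻¹) hf).symm
    _ ≤ ∑ k ∈ Icc 1 K, ((k : ℝ))⁻¹ :=
        sum_le_sum_of_subset_of_nonneg (by simpa [subset_iff] using hmaps)
          fun _ _ _ => by positivity
    _ = harmonic K := by simp [harmonic_eq_sum_Icc]
    _ ≤ 1 + log K := harmonic_le_one_add_log K

theorem sum_erase_inv_abs_sub_le {T : Finset ℕ} {N : ℕ} (hT : T ⊆ range N) {m₀ : ℕ}
    (hm₀ : m₀ ∈ T) :
    ∑ m ∈ T.erase m₀, |(m : ℝ) - m₀|⁻¹ ≤ 2 * (1 + log N) := by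
  have hlt : ∀ m ∈ T, m < N := fun m hm => mem_range.mp (hT hm)
  have hm₀N := hlt m₀ hm₀
  rw [← sum_filter_add_sum_filter_not _ (m₀ < ·)]
  have habove : ∑ m ∈ (T.erase m₀).filter (m₀ < ·), |(m : ℝ) - m₀|⁻¹ ≤ 1 + log N := by
    refine le_of_eq_of_le (sum_congr rfl fun m hm => ?_)
      (sum_inv_le_one_add_log_of_injOn (f := (· - m₀)) ?_ ?_)
    · have : m₀ < m := (mem_filter.mp hm).2
      rw [Nat.cast_sub this.le, abs_of_pos (sub_pos.mpr (by exact_mod_cast this))]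
    · intro a ha b hb hab
      simp only [coe_filter, Set.mem_ofPred_eq] at ha hb hab
      omega
    · intro m hm
      simp only [mem_filter, mem_erase] at hm
      have := hlt m hm.1.2
      simp only [mem_Icc]
      omega
  have hbelow : ∑ m ∈ (T.erase m₀).filter (¬ m₀ < ·), |(m : ℝ) - m₀|⁻¹ ≤ 1 + log N := by
    refine le_of_eq_of_le (sum_congr rfl fun m hm => ?_)
      (sum_inv_le_one_add_log_of_injOn (f := (m₀ - ·)) ?_ ?_)
    · simp only [mem_filter, mem_erase] at hm
      have : m < m₀ := by omega
      rw [Nat.cast_sub this.le, abs_sub_comm, abs_of_pos (sub_pos.mpr (by exact_mod_cast this))]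
    · intro a ha b hb hab
      simp only [coe_filter, mem_erase, Set.mem_ofPred_eq] at ha hb hab
      omega
    · intro m hm
      simp only [mem_filter, mem_erase] at hm
      have := hlt m hm.1.2
      simp only [mem_Icc]
      omega
  linarith

theorem sum_inv_abs_sub_add_le_of_separated {T : Finset ℕ} {N : ℕ} (hT : T ⊆ range N)
    (x : ℕ → ℝ) (y : ℝ) {δ : ℝ} (hδ : 0 < δ)
    (hsep : ∀ m ∈ T, ∀ m' ∈ T, δ * |(m : ℝ) - m'| ≤ |x m - x m'|) :
    ∑ m ∈ T, (|y - x m| + δ)⁻¹ ≤ (5 + 4 * log N) / δ := by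
  have hlog : 0 ≤ log N := log_natCast_nonneg N
  rcases T.eq_empty_or_nonempty with rfl | hne
  · simp only [sum_empty]; positivity
  obtain ⟨m₀, hm₀, hmin⟩ := exists_min_image T (fun m => |y - x m|) hne
  have hfar : ∀ m ∈ T.erase m₀, (|y - x m| + δ)⁻¹ ≤ 2 / δ * |(m : ℝ) - m₀|⁻¹ := by
    intro m hm
    obtain ⟨hne, hmT⟩ := mem_erase.mp hm
    have hgap : 0 < |(m : ℝ) - m₀| := abs_pos.mpr (sub_ne_zero.mpr (by exact_mod_cast hne))
    -- `m₀` is the point closest to `y`, so `y` is at least half the gap away from `x m`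
    have hclose : δ * |(m : ℝ) - m₀| ≤ 2 * |y - x m| := by
      have := abs_sub_le (x m) y (x m₀)
      rw [abs_sub_comm (x m) y] at this
      linarith [hsep m hmT m₀ hm₀, hmin m hmT]
    calc (|y - x m| + δ)⁻¹ ≤ (δ * |(m : ℝ) - m₀| / 2)⁻¹ :=
          inv_anti₀ (by positivity) (by linarith)
      _ = 2 / δ * |(m : ℝ) - m₀|⁻¹ := by field_simp
  calc ∑ m ∈ T, (|y - x m| + δ)⁻¹
      = (|y - x m₀| + δ)⁻¹ + ∑ m ∈ T.erase m₀, (|y - x m| + δ)⁻¹ := (add_sum_erase _ _ hm₀).symm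
    _ ≤ δ⁻¹ + ∑ m ∈ T.erase m₀, 2 / δ * |(m : ℝ) - m₀|⁻¹ := by
        gcongr ?_ + ?_
        · exact inv_anti₀ hδ (le_add_of_nonneg_left (abs_nonneg _))
        · exact sum_le_sum hfar
    _ ≤ δ⁻¹ + 2 / δ * (2 * (1 + log N)) := by
        rw [← mul_sum]
        gcongr
        exact sum_erase_inv_abs_sub_le hT hm₀
    _ = (5 + 4 * log N) / δ := by field_simp; ring

noncomputable def cubicTerm (j : ℕ) (z x : ℝ) : ℝ := |x| ^ j / (|z + 4 * x - x ^ 3| + x ^ 2)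

theorem cubicTerm_neg (j : ℕ) (z x : ℝ) : cubicTerm j z (-x) = cubicTerm j (-z) x := by
  unfold cubicTerm
  rw [abs_neg, neg_sq, ← abs_neg (-z + 4 * x - x ^ 3)]
  ring_nf

theorem cubicTerm_natCast (j : ℕ) (y : ℝ) (m : ℕ) :
    cubicTerm j y m = (m : ℝ) ^ j * (|y - ((m : ℝ) ^ 3 - 4 * m)| + (m : ℝ) ^ 2)⁻¹ := by
  unfold cubicTerm
  rw [Nat.abs_cast, div_eq_mul_inv]
  ring_nf

theorem abs_sub_mul_le_abs_cubic_sub {m m' : ℕ} (hm : 1 ≤ m) (hm' : 1 ≤ m') :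
    ((m : ℝ) ^ 2 + (m' : ℝ) ^ 2) / 2 * |(m : ℝ) - m'|
      ≤ |((m : ℝ) ^ 3 - 4 * m) - ((m' : ℝ) ^ 3 - 4 * m')| := by
  rcases eq_or_ne m m' with rfl | hne
  · simp
  have hsum : (3 : ℝ) ≤ m + m' := by exact_mod_cast (by omega : 3 ≤ m + m')
  have hfactor : ((m : ℝ) ^ 2 + (m' : ℝ) ^ 2) / 2 ≤ (m : ℝ) ^ 2 + m * m' + (m' : ℝ) ^ 2 - 4 := by
    nlinarith
  rw [show ((m : ℝ) ^ 3 - 4 * m) - ((m' : ℝ) ^ 3 - 4 * m')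
      = ((m : ℝ) ^ 2 + m * m' + (m' : ℝ) ^ 2 - 4) * (m - m') by ring,
    abs_mul, abs_of_nonneg ((by positivity : (0 : ℝ) ≤ _).trans hfactor)]
  exact mul_le_mul_of_nonneg_right hfactor (abs_nonneg _)

section

variable {y A : ℝ}

theorem one_lt_of_pow_three_eq (hA : A ^ 3 = |y| + 2) : 1 < A := by
  by_contra! h
  nlinarith [abs_nonneg y, sq_nonneg (A + 1 / 2)]

theorem sum_cubicTerm_zero_le_of_subset_Icc (hA : A ^ 3 = |y| + 2) {T : Finset ℕ}
    (hT : T ⊆ Icc 1 ⌊A / 4⌋₊) : ∑ m ∈ T, cubicTerm 0 y m ≤ 1 / (2 * A ^ 2) := by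
  have hA0 : 0 < A := one_pos.trans (one_lt_of_pow_three_eq hA)
  have hterm : ∀ m ∈ T, cubicTerm 0 y m ≤ 2 / A ^ 3 := by
    intro m hm
    obtain ⟨hm1, hmA⟩ := mem_Icc.mp (hT hm)
    have hm1' : (1 : ℝ) ≤ m := by exact_mod_cast hm1
    have hmA' : 4 * (m : ℝ) ≤ A := by
      linarith [(Nat.le_floor_iff (by positivity)).mp hmA]
    have hcube : (4 * (m : ℝ)) ^ 3 ≤ A ^ 3 := pow_le_pow_left₀ (by positivity) hmA' 3
    have hp : |(m : ℝ) ^ 3 - 4 * m| ≤ (m : ℝ) ^ 3 + 4 * m :=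
      abs_le.mpr ⟨by nlinarith [pow_nonneg (Nat.cast_nonneg m : (0 : ℝ) ≤ m) 3], by linarith⟩
    -- `m ^ 3 - 4 * m` is tiny compared with `|y| = A ^ 3 - 2`
    have hden : A ^ 3 / 2 ≤ |y - ((m : ℝ) ^ 3 - 4 * m)| + (m : ℝ) ^ 2 := by
      nlinarith [abs_sub_abs_le_abs_sub y ((m : ℝ) ^ 3 - 4 * m), sq_nonneg ((m : ℝ) - 2)]
    rw [cubicTerm_natCast, pow_zero, one_mul, ← one_div,
      div_le_div_iff₀ ((by positivity : (0 : ℝ) < A ^ 3 / 2).trans_le hden) (by positivity)]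
    linarith
  calc ∑ m ∈ T, cubicTerm 0 y m ≤ T.card • (2 / A ^ 3) := sum_le_card_nsmul _ _ _ hterm
    _ ≤ (A / 4) * (2 / A ^ 3) := by
        rw [nsmul_eq_mul]
        gcongr
        calc (T.card : ℝ) ≤ (Icc 1 ⌊A / 4⌋₊).card := by exact_mod_cast card_le_card hT
          _ ≤ A / 4 := by simpa using Nat.floor_le (by positivity : 0 ≤ A / 4)
    _ = 1 / (2 * A ^ 2) := by field_simp; ring

theorem sum_cubicTerm_zero_le_of_lt_four_mul (hA : 0 < A) {T : Finset ℕ} {N : ℕ}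
    (hTN : T ⊆ range N) (hT : ∀ m ∈ T, 1 ≤ m ∧ A < 4 * m) :
    ∑ m ∈ T, cubicTerm 0 y m ≤ (80 + 64 * log N) / A ^ 2 := by
  have hδ : 0 < A ^ 2 / 16 := by positivity
  have hsq : ∀ m ∈ T, A ^ 2 / 16 ≤ (m : ℝ) ^ 2 := fun m hm => by nlinarith [(hT m hm).2]
  have hsep : ∀ m ∈ T, ∀ m' ∈ T, A ^ 2 / 16 * |(m : ℝ) - m'|
      ≤ |((m : ℝ) ^ 3 - 4 * m) - ((m' : ℝ) ^ 3 - 4 * m')| := by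
    intro m hm m' hm'
    refine le_trans ?_ (abs_sub_mul_le_abs_cubic_sub (hT m hm).1 (hT m' hm').1)
    exact mul_le_mul_of_nonneg_right (by linarith [hsq m hm, hsq m' hm']) (abs_nonneg _)
  calc ∑ m ∈ T, cubicTerm 0 y m
      ≤ ∑ m ∈ T, (|y - ((m : ℝ) ^ 3 - 4 * m)| + A ^ 2 / 16)⁻¹ := by
        refine sum_le_sum fun m hm => ?_
        rw [cubicTerm_natCast, pow_zero, one_mul]
        exact inv_anti₀ (by positivity) (by linarith [hsq m hm])
    _ ≤ (5 + 4 * log N) / (A ^ 2 / 16) :=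
        sum_inv_abs_sub_add_le_of_separated hTN (fun m => (m : ℝ) ^ 3 - 4 * m) y hδ hsep
    _ = (80 + 64 * log N) / A ^ 2 := by field_simp; ring

theorem sum_filter_lt_cubicTerm_zero_le (hA : A ^ 3 = |y| + 2) {s : Finset ℕ} (hs : 0 ∉ s)
    (N : ℕ) :
    ∑ m ∈ s with m < N, cubicTerm 0 y m ≤ (81 + 64 * log N) / A ^ 2 := by
  have hA0 : 0 < A := one_pos.trans (one_lt_of_pow_three_eq hA)
  have hpos : ∀ m ∈ s, 1 ≤ m := fun m hm =>
    Nat.one_le_iff_ne_zero.mpr (ne_of_mem_of_not_mem hm hs)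
  rw [← sum_filter_add_sum_filter_not _ (fun m : ℕ => 4 * (m : ℝ) ≤ A)]
  have hsmall := sum_cubicTerm_zero_le_of_subset_Icc (y := y) hA
    (T := (s.filter (· < N)).filter (fun m : ℕ => 4 * (m : ℝ) ≤ A)) (by
      intro m hm
      simp only [mem_filter] at hm
      exact mem_Icc.mpr ⟨hpos m hm.1.1, Nat.le_floor (by linarith)⟩)
  have hlarge := sum_cubicTerm_zero_le_of_lt_four_mul (y := y) hA0
    (T := (s.filter (· < N)).filter (fun m : ℕ => ¬ 4 * (m : ℝ) ≤ A)) (N := N)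
    (fun m hm => by simp only [mem_filter] at hm; exact mem_range.mpr hm.1.2)
    (fun m hm => by simp only [mem_filter] at hm; exact ⟨hpos m hm.1.1, not_le.mp hm.2⟩)
  have hhalf : 1 / (2 * A ^ 2) ≤ 1 / A ^ 2 := by gcongr; nlinarith [pow_pos hA0 2]
  calc _ ≤ 1 / A ^ 2 + (80 + 64 * log N) / A ^ 2 := by linarith
    _ = (81 + 64 * log N) / A ^ 2 := by rw [← add_div]; ring_nf

theorem pow_three_div_two_le_abs_sub_add_sq (hA : A ^ 3 = |y| + 2) {m : ℕ} (hm : 3 * A ≤ m) :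
    (m : ℝ) ^ 3 / 2 ≤ |y - ((m : ℝ) ^ 3 - 4 * m)| + (m : ℝ) ^ 2 := by
  have hA1 := one_lt_of_pow_three_eq hA
  have hm4 : (4 : ℝ) ≤ m := by
    have : 3 < m := by exact_mod_cast (by linarith : (3 : ℝ) < m)
    exact_mod_cast this
  have hcube : (3 * A) ^ 3 ≤ (m : ℝ) ^ 3 := pow_le_pow_left₀ (by positivity) hm 3
  have hy : y ≤ |y| := le_abs_self y
  have hdist : ((m : ℝ) ^ 3 - 4 * m) - y ≤ |y - ((m : ℝ) ^ 3 - 4 * m)| := by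
    rw [abs_sub_comm]; exact le_abs_self _
  have hsq : 4 * (m : ℝ) ≤ (m : ℝ) ^ 2 := by nlinarith
  have hm3 : 0 ≤ (m : ℝ) ^ 3 := by positivity
  nlinarith

theorem sum_cubicTerm_tail_le (hA : A ^ 3 = |y| + 2) {j : ℕ} (hj : j ≤ 1) {T : Finset ℕ}
    {N : ℕ} (hN : 3 * A ≤ N) (hT : ∀ m ∈ T, N ≤ m) :
    ∑ m ∈ T, cubicTerm j y m ≤ 4 / (N : ℝ) ^ (2 - j) := by
  have hA1 := one_lt_of_pow_three_eq hA
  have hN0 : (0 : ℝ) < N := by linarith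
  have hterm : ∀ m ∈ T, cubicTerm j y m ≤ 2 / (N : ℝ) ^ (1 - j) * ((m : ℝ) ^ 2)⁻¹ := by
    intro m hm
    have hNm : (N : ℝ) ≤ m := by exact_mod_cast hT m hm
    have hm0 : (0 : ℝ) < m := hN0.trans_le hNm
    rw [cubicTerm_natCast]
    calc (m : ℝ) ^ j * (|y - ((m : ℝ) ^ 3 - 4 * m)| + (m : ℝ) ^ 2)⁻¹
        ≤ (m : ℝ) ^ j * ((m : ℝ) ^ 3 / 2)⁻¹ := by
          gcongr
          exact pow_three_div_two_le_abs_sub_add_sq hA (hN.trans hNm)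
      _ ≤ 2 / (N : ℝ) ^ (1 - j) * ((m : ℝ) ^ 2)⁻¹ := by
          obtain rfl | rfl : j = 0 ∨ j = 1 := by omega
          · field_simp
            simpa using hNm
          · field_simp
            simp
  have hN1 : 1 ≤ N := by exact_mod_cast hN0
  have hsub : T ⊆ Ioo (N - 1) (T.sup id + 1) := fun m hm =>
    mem_Ioo.mpr ⟨by have := hT m hm; omega, Nat.lt_succ_of_le (le_sup (f := id) hm)⟩
  calc ∑ m ∈ T, cubicTerm j y m ≤ ∑ m ∈ T, 2 / (N : ℝ) ^ (1 - j) * ((m : ℝ) ^ 2)⁻¹ :=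
        sum_le_sum hterm
    _ ≤ 2 / (N : ℝ) ^ (1 - j) * ∑ m ∈ Ioo (N - 1) (T.sup id + 1), ((m : ℝ) ^ 2)⁻¹ := by
        rw [← mul_sum]
        gcongr
    _ ≤ 2 / (N : ℝ) ^ (1 - j) * (2 / N) := by
        gcongr
        convert sum_Ioo_inv_sq_le (α := ℝ) (N - 1) (T.sup id + 1) using 2
        rw [Nat.cast_sub hN1, Nat.cast_one, sub_add_cancel]
    _ = 4 / (N : ℝ) ^ (2 - j) := by
        rw [show 2 - j = (1 - j) + 1 by omega, pow_succ]
        field_simp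
        ring

theorem log_natCeil_three_mul_le (hA : A ^ 3 = |y| + 2) :
    log ⌈3 * A⌉₊ ≤ 3 * log (|y| + 2) := by
  have hA1 := one_lt_of_pow_three_eq hA
  have hN3 : (⌈3 * A⌉₊ : ℝ) ≤ (|y| + 2) ^ 3 := by
    have hNA : (⌈3 * A⌉₊ : ℝ) < 3 * A + 1 := Nat.ceil_lt_add_one (by positivity)
    have hAA : A ≤ A ^ 3 := le_self_pow₀ hA1.le (by norm_num)
    have hw : 2 ≤ A ^ 3 := by rw [hA]; linarith [abs_nonneg y]
    have hw3 : 4 * A ^ 3 ≤ (A ^ 3) ^ 3 := by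
      nlinarith [mul_le_mul hw hw (by norm_num) (by linarith)]
    rw [← hA]
    linarith
  calc log ⌈3 * A⌉₊ ≤ log ((|y| + 2) ^ 3) :=
        log_le_log (Nat.cast_pos.mpr (Nat.ceil_pos.mpr (by linarith))) hN3
    _ = 3 * log (|y| + 2) := by rw [log_pow]; norm_num

theorem sum_filter_lt_natCeil_cubicTerm_le (hA : A ^ 3 = |y| + 2) {j : ℕ} (hj : j ≤ 1)
    {s : Finset ℕ} (hs : 0 ∉ s) :
    ∑ m ∈ s with m < ⌈3 * A⌉₊, cubicTerm j y m
      ≤ 3 * (81 + 64 * log ⌈3 * A⌉₊) / A ^ (2 - j) := by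
  have hA0 : 0 < A := one_pos.trans (one_lt_of_pow_three_eq hA)
  have hA2 : A ^ 2 = A ^ j * A ^ (2 - j) := by rw [← pow_add, Nat.add_sub_cancel' (by omega)]
  calc ∑ m ∈ s with m < ⌈3 * A⌉₊, cubicTerm j y m
      ≤ ∑ m ∈ s with m < ⌈3 * A⌉₊, (3 * A) ^ j * cubicTerm 0 y m := by
        refine sum_le_sum fun m hm => ?_
        have hm : (m : ℝ) < 3 * A := Nat.lt_ceil.mp (mem_filter.mp hm).2
        rw [cubicTerm_natCast, cubicTerm_natCast, pow_zero, one_mul]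
        gcongr
    _ ≤ (3 * A) ^ j * ((81 + 64 * log ⌈3 * A⌉₊) / A ^ 2) := by
        rw [← mul_sum]
        gcongr
        exact sum_filter_lt_cubicTerm_zero_le hA hs _
    _ = 3 ^ j * (81 + 64 * log ⌈3 * A⌉₊) / A ^ (2 - j) := by
        rw [hA2, mul_pow]
        field_simp
    _ ≤ 3 * (81 + 64 * log ⌈3 * A⌉₊) / A ^ (2 - j) := by
        have h3 : (3 : ℝ) ^ j ≤ 3 := by
          simpa using pow_le_pow_right₀ (by norm_num : (1 : ℝ) ≤ 3) hj
        gcongr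

theorem sum_cubicTerm_le_of_pow_three_eq (hA : A ^ 3 = |y| + 2) {j : ℕ} (hj : j ≤ 1)
    {s : Finset ℕ} (hs : 0 ∉ s) :
    ∑ m ∈ s, cubicTerm j y m ≤ 1100 * log (|y| + 2) / A ^ (2 - j) := by
  have hA0 : 0 < A := one_pos.trans (one_lt_of_pow_three_eq hA)
  have hlogw : 1 / 2 ≤ log (|y| + 2) := by
    have := log_le_log two_pos (by linarith [abs_nonneg y] : (2 : ℝ) ≤ |y| + 2)
    linarith [log_two_gt_d9]
  have hN : 3 * A ≤ ⌈3 * A⌉₊ := Nat.le_ceil _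
  have hhigh : ∑ m ∈ s with ¬ m < ⌈3 * A⌉₊, cubicTerm j y m ≤ 4 / A ^ (2 - j) :=
    calc _ ≤ 4 / (⌈3 * A⌉₊ : ℝ) ^ (2 - j) :=
          sum_cubicTerm_tail_le hA hj hN fun m hm => not_lt.mp (mem_filter.mp hm).2
      _ ≤ 4 / A ^ (2 - j) := by gcongr; linarith
  rw [← sum_filter_add_sum_filter_not s (· < ⌈3 * A⌉₊)]
  calc _ ≤ 3 * (81 + 64 * log ⌈3 * A⌉₊) / A ^ (2 - j) + 4 / A ^ (2 - j) :=
        add_le_add (sum_filter_lt_natCeil_cubicTerm_le hA hj hs) hhigh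
    _ = (247 + 192 * log ⌈3 * A⌉₊) / A ^ (2 - j) := by rw [← add_div]; ring_nf
    _ ≤ 1100 * log (|y| + 2) / A ^ (2 - j) := by
        gcongr
        linarith [log_natCeil_three_mul_le hA]

end

theorem sum_cubicTerm_le {j : ℕ} (hj : j ≤ 1) (y : ℝ) {s : Finset ℕ} (hs : 0 ∉ s) :
    ∑ m ∈ s, cubicTerm j y m ≤ 1100 * log (|y| + 2) / (|y| + 2) ^ ((2 - (j : ℝ)) / 3) := by
  have hw : 0 ≤ |y| + 2 := by positivity
  have hA : ((|y| + 2) ^ ((3 : ℕ) : ℝ)⁻¹) ^ 3 = |y| + 2 := rpow_inv_natCast_pow hw (by norm_num)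
  convert sum_cubicTerm_le_of_pow_three_eq hA hj hs using 2
  rw [← rpow_natCast, ← rpow_mul hw, Nat.cast_sub (by omega)]
  ring_nf

theorem sum_le_two_mul_of_sum_natCast_le (g : ℤ → ℝ) {B : ℝ}
    (hpos : ∀ s : Finset ℕ, 0 ∉ s → ∑ m ∈ s, g m ≤ B)
    (hneg : ∀ s : Finset ℕ, 0 ∉ s → ∑ m ∈ s, g (-m) ≤ B) {T : Finset ℤ} (hT : 0 ∉ T) :
    ∑ n ∈ T, g n ≤ 2 * B := by
  have hne : ∀ n ∈ T, n ≠ 0 := fun n hn => ne_of_mem_of_not_mem hn hT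
  rw [← sum_filter_add_sum_filter_not T (0 < ·), two_mul]
  gcongr ?_ + ?_
  · have hinj : Set.InjOn Int.natAbs (T.filter (0 < ·)) := fun a ha b hb hab => by
      simp only [coe_filter, Set.mem_ofPred_eq] at ha hb
      omega
    calc ∑ n ∈ T with 0 < n, g n = ∑ m ∈ (T.filter (0 < ·)).image Int.natAbs, g m := by
          rw [sum_image hinj]
          exact sum_congr rfl fun n hn => by rw [Int.natAbs_of_nonneg (mem_filter.mp hn).2.le]
      _ ≤ B := hpos _ (by simp only [mem_image, mem_filter]; omega)
  · have hinj : Set.InjOn Int.natAbs (T.filter (¬ 0 < ·)) := fun a ha b hb hab => by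
      simp only [coe_filter, Set.mem_ofPred_eq] at ha hb
      have := hne a ha.1
      have := hne b hb.1
      omega
    calc ∑ n ∈ T with ¬ 0 < n, g n = ∑ m ∈ (T.filter (¬ 0 < ·)).image Int.natAbs, g (-m) := by
          rw [sum_image hinj]
          exact sum_congr rfl fun n hn => by
            rw [Int.ofNat_natAbs_of_nonpos (not_lt.mp (mem_filter.mp hn).2), neg_neg]
      _ ≤ B := hneg _ (by
          simp only [mem_image, mem_filter]
          rintro ⟨n, ⟨hn, -⟩, h0⟩
          exact hne n hn (Int.natAbs_eq_zero.mp h0))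

theorem stmt2 (j : ℕ) (hj : j = 0 ∨ j = 1) :
    ∃ C : ℝ, 0 < C ∧ ∀ z : ℝ,
      (∑' n : {n : ℤ // n ≠ 0},
          |(n.1 : ℝ)| ^ j / (|z + 4 * (n.1 : ℝ) - (n.1 : ℝ) ^ 3| + (n.1 : ℝ) ^ 2))
        ≤ C * Real.log (|z| + 2) / (|z| + 2) ^ ((2 - (j : ℝ)) / 3) := by
  have hj1 : j ≤ 1 := by omega
  refine ⟨2 * 1100, by norm_num, fun z => ?_⟩
  have hlog : 0 ≤ log (|z| + 2) := log_nonneg (by linarith [abs_nonneg z])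
  refine tsum_le_of_sum_le' (by positivity) fun S => ?_
  rw [mul_assoc, mul_div_assoc]
  change ∑ n ∈ S, cubicTerm j z n.1 ≤ _
  have hmap := sum_map S (Function.Embedding.subtype _) fun n : ℤ => cubicTerm j z n
  rw [Function.Embedding.coe_subtype] at hmap
  rw [← hmap]
  refine sum_le_two_mul_of_sum_natCast_le (fun n : ℤ => cubicTerm j z n)
    (fun s hs => ?_) (fun s hs => ?_) (by simp)
  · simpa only [Int.cast_natCast] using sum_cubicTerm_le hj1 z hs
  · simpa only [Int.cast_neg, Int.cast_natCast, cubicTerm_neg, abs_neg]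
      using sum_cubicTerm_le hj1 (-z) hs
end

section
/- Let F : ℂ³ → ℂ be holomorphic on all of ℂ³ and symmetric, i.e., F(z_{σ(1)}, z_{σ(2)}, z_{σ(3)}) = F(z₁, z₂, z₃) for every permutation σ of {1,2,3}. Then there exists an entire function G : ℂ → ℂ such that for every z ∈ ℂ and every triple (a,b,c) ∈ ℂ³ with a + b + c = 0, ab + bc + ca = 1 and abc = −iz (equivalently, X³ + X + iz = (X−a)(X−b)(X−c) as polynomials), one has G(z) = F(a,b,c). -/
/-!
Near every point `z₀` the cubic `X³ + X + I z` has a simple root (a triple root would force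
`a = 0`), which the inverse function theorem continues holomorphically. Where all three roots are
simple, `G` is locally `F` of three holomorphic functions. At the two branch points
`z² = 4/27`, where a root is double, the other two roots are `(-A ± s) / 2` with
`s² = -3 A² - 4 → 0`, so `G` is still continuous there, and Cauchy's integral formula (which
tolerates countably many exceptional points) makes `G` entire. `G` is well defined because two
root triples of the same `z` list the roots of the same polynomial, hence differ by a permutation.
-/

open Complex Polynomial Filter Topology

theorem differentiable_of_continuous_of_countable {E : Type*} [NormedAddCommGroup E]
    [NormedSpace ℂ E] [CompleteSpace E] {f : ℂ → E} {s : Set ℂ} (hs : s.Countable)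
    (hc : Continuous f) (hd : ∀ z ∉ s, DifferentiableAt ℂ f z) : Differentiable ℂ f := fun _ =>
  (hasFPowerSeriesOnBall_of_differentiable_off_countable (R := 1) hs hc.continuousOn
    (fun w hw => hd w hw.2) one_pos).analyticAt.differentiableAt

theorem tendsto_zero_of_tendsto_sq {α : Type*} {f : α → ℂ} {l : Filter α}
    (h : Tendsto (fun x => f x ^ 2) l (𝓝 0)) : Tendsto f l (𝓝 0) := by
  rw [tendsto_zero_iff_norm_tendsto_zero]
  simpa [norm_pow, Real.sqrt_sq (norm_nonneg _)] using h.norm.sqrt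

theorem exists_perm_comp_eq_of_map_univ_eq {ι α : Type*} [Fintype ι] {v w : ι → α}
    (h : Finset.univ.val.map v = Finset.univ.val.map w) : ∃ σ : Equiv.Perm ι, w ∘ σ = v := by
  classical
  have hcard : ∀ x, Fintype.card {i // v i = x} = Fintype.card {i // w i = x} := fun x => by
    simpa [Multiset.count_map, Fintype.card_subtype, eq_comm, Finset.card_def] using
      congrArg (Multiset.count x) h
  exact ⟨Equiv.ofFiberEquiv fun x => Fintype.equivOfCardEq (hcard x),
    funext <| Equiv.ofFiberEquiv_map _⟩

def IsRootTriple (z a b c : ℂ) : Prop :=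
  a + b + c = 0 ∧ a * b + b * c + c * a = 1 ∧ a * b * c = -I * z

namespace IsRootTriple

variable {z a b c : ℂ}

theorem rotate (h : IsRootTriple z a b c) : IsRootTriple z b c a :=
  ⟨by linear_combination h.1, by linear_combination h.2.1, by linear_combination h.2.2⟩

theorem root (h : IsRootTriple z a b c) : a ^ 3 + a + I * z = 0 := by
  linear_combination a ^ 2 * h.1 - a * h.2.1 + h.2.2

theorem three_mul_sq_add_one (h : IsRootTriple z a b c) : 3 * a ^ 2 + 1 = (a - b) * (a - c) := by
  linear_combination 2 * a * h.1 - h.2.1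

theorem prod_X_sub_C (h : IsRootTriple z a b c) :
    (X - C a) * (X - C b) * (X - C c) = X ^ 3 + X + C (I * z) := by
  have e : (X - C a) * (X - C b) * (X - C c) =
      X ^ 3 - C (a + b + c) * X ^ 2 + C (a * b + b * c + c * a) * X - C (a * b * c) := by
    simp only [map_add, map_mul]; ring
  rw [e, h.1, h.2.1, h.2.2]
  simp only [map_zero, map_one, map_mul, map_neg]; ring

theorem roots_eq (h : IsRootTriple z a b c) : (X ^ 3 + X + C (I * z)).roots = {a, b, c} := by
  rw [← h.prod_X_sub_C, ← roots_multiset_prod_X_sub_C {a, b, c}]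
  simp [mul_assoc]

theorem apply_eq {F : (Fin 3 → ℂ) → ℂ} (hsym : ∀ σ : Equiv.Perm (Fin 3), ∀ v, F (v ∘ σ) = F v)
    {a' b' c' : ℂ} (h : IsRootTriple z a b c) (h' : IsRootTriple z a' b' c') :
    F ![a, b, c] = F ![a', b', c'] := by
  obtain ⟨σ, hσ⟩ := exists_perm_comp_eq_of_map_univ_eq (v := ![a, b, c]) (w := ![a', b', c'])
    (h.roots_eq.symm.trans h'.roots_eq)
  rw [← hσ, hsym]

theorem ne_of_double (h : IsRootTriple z a b b) : a ≠ b := by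
  rintro rfl
  have : a = 0 := by linear_combination h.1 / 3
  simpa [this] using h.2.1

theorem sq_of_double (h : IsRootTriple z a b b) : z ^ 2 = 4 / 27 := by
  have hx : a = -2 * b := by linear_combination h.1
  have hy : b ^ 2 = -1 / 3 := by linear_combination (-1/3) * h.2.1 + (2 * b / 3) * h.1
  have hz : 2 * b ^ 3 = I * z := by linear_combination -h.2.2 + b ^ 2 * hx
  linear_combination
    z ^ 2 * I_sq + (I * z + 2 * b ^ 3) * hz - 4 * (b ^ 4 - b ^ 2 / 3 + 1 / 9) * hy

theorem double_or_pairwise_ne (h : IsRootTriple z a b c) :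
    (∃ x y, IsRootTriple z x y y) ∨ (a ≠ b ∧ b ≠ c ∧ a ≠ c) := by
  by_cases hab : a = b
  · subst hab; exact .inl ⟨_, _, h.rotate.rotate⟩
  by_cases hbc : b = c
  · subst hbc; exact .inl ⟨_, _, h⟩
  by_cases hac : a = c
  · subst hac; exact .inl ⟨_, _, h.rotate⟩
  exact .inr ⟨hab, hbc, hac⟩

theorem exists_local_root {z₀ : ℂ} (h : IsRootTriple z₀ a b c) (hab : a ≠ b) (hac : a ≠ c) :
    ∃ A : ℂ → ℂ, A z₀ = a ∧ DifferentiableAt ℂ A z₀ ∧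
      ∀ᶠ z in 𝓝 z₀, A z ^ 3 + A z + I * z = 0 := by
  have hφ : HasStrictDerivAt (fun w => I * (w ^ 3 + w)) (I * (3 * a ^ 2 + 1)) a := by
    simpa using ((hasStrictDerivAt_pow 3 a).add (hasStrictDerivAt_id a)).const_mul I
  have hne : I * (3 * a ^ 2 + 1) ≠ 0 := by
    rw [h.three_mul_sq_add_one]
    exact mul_ne_zero I_ne_zero (mul_ne_zero (sub_ne_zero.2 hab) (sub_ne_zero.2 hac))
  obtain rfl : z₀ = I * (a ^ 3 + a) := by linear_combination -I * h.root + z₀ * I_sq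
  refine ⟨_, (hφ.eventually_left_inverse hne).self_of_nhds,
    (hφ.to_localInverse hne).hasDerivAt.differentiableAt, ?_⟩
  filter_upwards [hφ.eventually_right_inverse hne] with z hz
  generalize hφ.localInverse _ _ _ hne z = w at hz ⊢
  linear_combination -I * hz + (w ^ 3 + w) * I_sq

end IsRootTriple

theorem isRootTriple_of_pairwise_ne {z a b c : ℂ} (ha : a ^ 3 + a + I * z = 0)
    (hb : b ^ 3 + b + I * z = 0) (hc : c ^ 3 + c + I * z = 0) (hab : a ≠ b) (hbc : b ≠ c)
    (hac : a ≠ c) : IsRootTriple z a b c := by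
  have eab : a ^ 2 + a * b + b ^ 2 + 1 = 0 := mul_left_cancel₀ (sub_ne_zero.2 hab) <| by
    linear_combination ha - hb
  have eac : a ^ 2 + a * c + c ^ 2 + 1 = 0 := mul_left_cancel₀ (sub_ne_zero.2 hac) <| by
    linear_combination ha - hc
  have hsum : a + b + c = 0 := mul_left_cancel₀ (sub_ne_zero.2 hbc) <| by
    linear_combination eab - eac
  refine ⟨hsum, by linear_combination -eab + (a + b) * hsum, ?_⟩
  linear_combination a * b * hsum + ha - a * eab

theorem isRootTriple_of_sq_eq {z a s : ℂ} (ha : a ^ 3 + a + I * z = 0)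
    (hs : s ^ 2 = -3 * a ^ 2 - 4) : IsRootTriple z a ((-a + s) / 2) ((-a - s) / 2) :=
  ⟨by ring, by linear_combination (-1/4) * hs, by linear_combination (-a / 4) * hs + ha⟩

theorem exists_isRootTriple (z : ℂ) : ∃ a b c, IsRootTriple z a b c := by
  obtain ⟨a, ha⟩ := Complex.exists_root (f := X ^ 3 + X + C (I * z)) <| by
    rw [show (X ^ 3 + X + C (I * z) : ℂ[X]).degree = 3 by compute_degree!]; norm_num
  obtain ⟨s, hs⟩ := IsAlgClosed.exists_pow_nat_eq (-3 * a ^ 2 - 4) two_pos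
  exact ⟨a, _, _, isRootTriple_of_sq_eq (by simpa using ha) hs⟩

section

variable {F : (Fin 3 → ℂ) → ℂ} {G : ℂ → ℂ}

theorem differentiableAt_of_pairwise_ne (hF : Differentiable ℂ F)
    (hG : ∀ z a b c, IsRootTriple z a b c → G z = F ![a, b, c]) {z₀ a b c : ℂ}
    (h : IsRootTriple z₀ a b c) (hab : a ≠ b) (hbc : b ≠ c) (hac : a ≠ c) :
    DifferentiableAt ℂ G z₀ := by
  obtain ⟨A, rfl, hA, hA_root⟩ := h.exists_local_root hab hac
  obtain ⟨B, rfl, hB, hB_root⟩ := h.rotate.exists_local_root hbc hab.symm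
  obtain ⟨C, rfl, hC, hC_root⟩ := h.rotate.rotate.exists_local_root hac.symm hbc.symm
  have hA' := hA.continuousAt
  have hB' := hB.continuousAt
  have hC' := hC.continuousAt
  have hG_eq : G =ᶠ[𝓝 z₀] fun z => F ![A z, B z, C z] := by
    filter_upwards [hA_root, hB_root, hC_root, (hA'.ne_iff_eventually_ne hB').1 hab,
      (hB'.ne_iff_eventually_ne hC').1 hbc, (hA'.ne_iff_eventually_ne hC').1 hac]
      with z ha hb hc hab hbc hac
    exact hG _ _ _ _ (isRootTriple_of_pairwise_ne ha hb hc hab hbc hac)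
  refine hG_eq.differentiableAt_iff.2 (hF.differentiableAt.comp z₀ ?_)
  exact differentiableAt_pi.2 fun i => by fin_cases i <;> assumption

theorem continuousAt_of_double (hF : Continuous F)
    (hG : ∀ z a b c, IsRootTriple z a b c → G z = F ![a, b, c]) {z₀ a b : ℂ}
    (h : IsRootTriple z₀ a b b) : ContinuousAt G z₀ := by
  obtain ⟨A, rfl, hA, hA_root⟩ := h.exists_local_root h.ne_of_double h.ne_of_double
  choose s hs using fun z => IsAlgClosed.exists_pow_nat_eq (-3 * A z ^ 2 - 4) two_pos
  have hA_cont := hA.continuousAt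
  have hdisc : -3 * A z₀ ^ 2 - 4 = 0 := by
    linear_combination 4 * h.2.1 - (3 * A z₀ + 2 * b) * h.1
  have hs_tendsto : Tendsto s (𝓝 z₀) (𝓝 0) := tendsto_zero_of_tendsto_sq <| by
    have : ContinuousAt (fun z => -3 * A z ^ 2 - 4) z₀ := by fun_prop
    simpa only [hs, ContinuousAt, hdisc] using this
  have hs_cont : ContinuousAt s z₀ := by
    rwa [ContinuousAt, pow_eq_zero_iff two_ne_zero |>.1 ((hs z₀).trans hdisc)]
  have hG_eq : G =ᶠ[𝓝 z₀] fun z => F ![A z, (-A z + s z) / 2, (-A z - s z) / 2] :=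
    hA_root.mono fun z hz => hG _ _ _ _ (isRootTriple_of_sq_eq hz (hs z))
  refine ContinuousAt.congr (hF.continuousAt.comp ?_) hG_eq.symm
  exact hA_cont.matrixVecCons <| ((hA_cont.neg.add hs_cont).div_const 2).matrixVecCons <|
    ((hA_cont.neg.sub hs_cont).div_const 2).matrixVecCons continuousAt_const

theorem continuous_of_forall_isRootTriple (hF : Differentiable ℂ F)
    (hG : ∀ z a b c, IsRootTriple z a b c → G z = F ![a, b, c]) : Continuous G :=
  continuous_iff_continuousAt.2 fun z₀ => by
    obtain ⟨a, b, c, h⟩ := exists_isRootTriple z₀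
    rcases h.double_or_pairwise_ne with ⟨x, y, hxy⟩ | ⟨hab, hbc, hac⟩
    · exact continuousAt_of_double hF.continuous hG hxy
    · exact (differentiableAt_of_pairwise_ne hF hG h hab hbc hac).continuousAt

theorem differentiable_of_forall_isRootTriple (hF : Differentiable ℂ F)
    (hG : ∀ z a b c, IsRootTriple z a b c → G z = F ![a, b, c]) : Differentiable ℂ G := by
  refine differentiable_of_continuous_of_countable (s := {z | z ^ 2 = 4 / 27}) ?_
    (continuous_of_forall_isRootTriple hF hG) fun z hz => ?_
  · exact (nthRoots 2 (4 / 27 : ℂ)).toFinset.countable_toSet.mono fun z hz => by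
      simpa [mem_nthRoots] using hz
  · obtain ⟨a, b, c, h⟩ := exists_isRootTriple z
    rcases h.double_or_pairwise_ne with ⟨x, y, hxy⟩ | ⟨hab, hbc, hac⟩
    · exact absurd hxy.sq_of_double hz
    · exact differentiableAt_of_pairwise_ne hF hG h hab hbc hac

theorem exists_forall_isRootTriple_eq (hsym : ∀ σ : Equiv.Perm (Fin 3), ∀ v, F (v ∘ σ) = F v) :
    ∃ G : ℂ → ℂ, ∀ z a b c, IsRootTriple z a b c → G z = F ![a, b, c] := by
  choose a b c h using exists_isRootTriple
  exact ⟨fun z => F ![a z, b z, c z], fun z _ _ _ h' => (h z).apply_eq hsym h'⟩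

end

theorem stmt3 (F : (Fin 3 → ℂ) → ℂ) (hF : Differentiable ℂ F)
    (hsym : ∀ σ : Equiv.Perm (Fin 3), ∀ v : Fin 3 → ℂ, F (v ∘ σ) = F v) :
    ∃ G : ℂ → ℂ, Differentiable ℂ G ∧
      ∀ z a b c : ℂ, a + b + c = 0 → a * b + b * c + c * a = 1 →
        a * b * c = -Complex.I * z → G z = F ![a, b, c] := by
  obtain ⟨G, hG⟩ := exists_forall_isRootTriple_eq hsym
  exact ⟨G, differentiable_of_forall_isRootTriple hF hG,
    fun z a b c h₁ h₂ h₃ => hG z a b c ⟨h₁, h₂, h₃⟩⟩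
end

section
/- Let L > 0. There exist entire functions G : ℂ → ℂ and H : ℂ → ℂ such that for every z ∈ ℂ with 27z² ≠ 4 and every triple (λ₁, λ₂, λ₃) ∈ ℂ³ with λ₁+λ₂+λ₃ = 0, λ₁λ₂+λ₂λ₃+λ₃λ₁ = 1 and λ₁λ₂λ₃ = −iz (the roots of λ³+λ+iz = 0, which are then pairwise distinct), one has G(z)·Ξ(λ₁,λ₂,λ₃) = P(λ₁,λ₂,λ₃) and H(z)·Ξ(λ₁,λ₂,λ₃) = detQ(λ₁,λ₂,λ₃). -/
/-- `det Q` from the paper: the determinant of the boundary-condition matrix. -/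
noncomputable def detQ (L : ℝ) (a b c : ℂ) : ℂ :=
  Matrix.det !![(1 : ℂ), 1, 1;
    Complex.exp (a * L), Complex.exp (b * L), Complex.exp (c * L);
    a * Complex.exp (a * L), b * Complex.exp (b * L), c * Complex.exp (c * L)]

/-- `P` from the paper. -/
noncomputable def Pfun (L : ℝ) (a b c : ℂ) : ℂ :=
  Matrix.det !![(1 : ℂ), 1, 1;
    Complex.exp (a * L), Complex.exp (b * L), Complex.exp (c * L);
    a, b, c]

/-- `Ξ` from the paper: the Vandermonde determinant. -/
noncomputable def Xi (a b c : ℂ) : ℂ :=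
  Matrix.det !![(1 : ℂ), 1, 1; a, b, c; a ^ 2, b ^ 2, c ^ 2]

/-!
Write `Λₙ(a, b, c) = aⁿ(b − c) + bⁿ(c − a) + cⁿ(a − b)`, so that `P = ∑ Λₙ Lⁿ / n!`. For roots
`a, b, c` of `X³ + pX + q` the relation `λⁿ⁺³ = −p λⁿ⁺¹ − q λⁿ` gives `Λₙ = Qₙ(p, q) · Ξ`
(`altPowCoeff`), where `Qₙ = −hₙ₋₂(a, b, c)` is a polynomial in the coefficients alone that grows
at most geometrically. Hence `G(z) = ∑ Qₙ(1, iz) Lⁿ / n!` is entire and `G · Ξ = P`. Since the roots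
sum to zero, `e^{λⱼL} e^{λₖL} = e^{−λᵢL}`, so `det Q` is `P` at the negated roots, which are the
roots of the cubic for `−z`; this gives `H(z) = −G(−z)`.
-/

open Complex

noncomputable section

def altPowCoeff (p q : ℂ) : ℕ → ℂ
  | 0 => 0
  | 1 => 0
  | 2 => -1
  | n + 3 => -p * altPowCoeff p q (n + 1) - q * altPowCoeff p q n

def altExpSum (x p q : ℂ) : ℂ :=
  ∑' n : ℕ, x ^ n / n.factorial * altPowCoeff p q n

lemma Xi_eq (a b c : ℂ) : Xi a b c = (b - a) * (c - a) * (c - b) := by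
  simp only [Xi, Matrix.det_fin_three, Matrix.of_apply, Matrix.cons_val', Matrix.cons_val_zero,
    Matrix.cons_val_one, Matrix.cons_val, Matrix.cons_val_fin_one]
  ring

lemma Xi_neg (a b c : ℂ) : Xi (-a) (-b) (-c) = -Xi a b c := by
  rw [Xi_eq, Xi_eq]; ring

lemma Pfun_eq (L : ℝ) (a b c : ℂ) :
    Pfun L a b c = exp (a * L) * (b - c) + exp (b * L) * (c - a) + exp (c * L) * (a - b) := by
  simp only [Pfun, Matrix.det_fin_three, Matrix.of_apply, Matrix.cons_val', Matrix.cons_val_zero,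
    Matrix.cons_val_one, Matrix.cons_val, Matrix.cons_val_fin_one]
  ring

lemma detQ_eq_Pfun_neg (L : ℝ) {a b c : ℂ} (h : a + b + c = 0) :
    detQ L a b c = Pfun L (-a) (-b) (-c) := by
  have hexp : ∀ u v w : ℂ, u + v + w = 0 → exp (u * L) * exp (v * L) = exp (-w * L) := by
    intro u v w huvw
    rw [← exp_add]
    congr 1
    linear_combination (L : ℂ) * huvw
  simp only [Pfun_eq, detQ, Matrix.det_fin_three, Matrix.of_apply, Matrix.cons_val',
    Matrix.cons_val_zero, Matrix.cons_val_one, Matrix.cons_val, Matrix.cons_val_fin_one]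
  rw [← hexp b c a (by linear_combination h), ← hexp a c b (by linear_combination h),
    ← hexp a b c h]
  ring

lemma roots_of_vieta {a b c p q : ℂ} (h₁ : a + b + c = 0) (h₂ : a * b + b * c + c * a = p)
    (h₃ : a * b * c = -q) :
    a ^ 3 + p * a + q = 0 ∧ b ^ 3 + p * b + q = 0 ∧ c ^ 3 + p * c + q = 0 :=
  ⟨by linear_combination a ^ 2 * h₁ - a * h₂ + h₃, by linear_combination b ^ 2 * h₁ - b * h₂ + h₃,
    by linear_combination c ^ 2 * h₁ - c * h₂ + h₃⟩

lemma altPowCoeff_mul_Xi {p q a b c : ℂ} (ha : a ^ 3 + p * a + q = 0)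
    (hb : b ^ 3 + p * b + q = 0) (hc : c ^ 3 + p * c + q = 0) (n : ℕ) :
    altPowCoeff p q n * Xi a b c = a ^ n * (b - c) + b ^ n * (c - a) + c ^ n * (a - b) := by
  induction n using altPowCoeff.induct with
  | case1 | case2 => simp only [altPowCoeff]; ring
  | case3 => rw [altPowCoeff, Xi_eq]; ring
  | case4 n ih₁ ih₀ =>
    simp only [altPowCoeff, Nat.succ_eq_add_one]
    linear_combination (-p) * ih₁ - q * ih₀ - a ^ n * (b - c) * ha - b ^ n * (c - a) * hb
      - c ^ n * (a - b) * hc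

lemma norm_altPowCoeff_le (p q : ℂ) (n : ℕ) : ‖altPowCoeff p q n‖ ≤ (1 + ‖p‖ + ‖q‖) ^ n := by
  set M := 1 + ‖p‖ + ‖q‖
  have hM : 1 ≤ M := by simp only [M]; linarith [norm_nonneg p, norm_nonneg q]
  induction n using altPowCoeff.induct with
  | case1 | case2 => simp only [altPowCoeff, norm_zero]; positivity
  | case3 => rw [altPowCoeff, norm_neg, norm_one]; exact one_le_pow₀ hM
  | case4 n ih₁ ih₀ =>
    have hstep : ‖p‖ * M ^ (n + 1) + ‖q‖ * M ^ n ≤ M ^ (n + 3) := by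
      have hM3 : ‖p‖ * M + ‖q‖ ≤ M ^ 3 :=
        calc ‖p‖ * M + ‖q‖ ≤ ‖p‖ * M + ‖q‖ * M := by
              gcongr; exact le_mul_of_one_le_right (norm_nonneg q) hM
          _ ≤ M * M := by rw [← add_mul]; gcongr; linarith
          _ ≤ M * M * M := le_mul_of_one_le_right (by positivity) hM
          _ = M ^ 3 := by ring
      calc ‖p‖ * M ^ (n + 1) + ‖q‖ * M ^ n = M ^ n * (‖p‖ * M + ‖q‖) := by ring
        _ ≤ M ^ n * M ^ 3 := by gcongr
        _ = M ^ (n + 3) := by ring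
    calc ‖altPowCoeff p q (n + 3)‖
        ≤ ‖p‖ * ‖altPowCoeff p q (n + 1)‖ + ‖q‖ * ‖altPowCoeff p q n‖ := by
          rw [altPowCoeff]
          refine (norm_sub_le _ _).trans_eq ?_
          rw [norm_mul, norm_mul, norm_neg]
      _ ≤ ‖p‖ * M ^ (n + 1) + ‖q‖ * M ^ n := by gcongr
      _ ≤ M ^ (n + 3) := hstep

lemma differentiable_altPowCoeff (p : ℂ) (n : ℕ) :
    Differentiable ℂ (fun q => altPowCoeff p q n) := by
  induction n using altPowCoeff.induct with
  | case1 | case2 | case3 => simp only [altPowCoeff]; fun_prop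
  | case4 n ih₁ ih₀ =>
    simp only [altPowCoeff]
    exact (ih₁.const_mul _).sub (differentiable_id.mul ih₀)

lemma altExpSum_mul_Xi (x : ℂ) {p q a b c : ℂ} (ha : a ^ 3 + p * a + q = 0)
    (hb : b ^ 3 + p * b + q = 0) (hc : c ^ 3 + p * c + q = 0) :
    altExpSum x p q * Xi a b c
      = exp (a * x) * (b - c) + exp (b * x) * (c - a) + exp (c * x) * (a - b) := by
  have hexp : ∀ u : ℂ, HasSum (fun n => u ^ n / n.factorial) (exp u) := fun u => by
    rw [exp_eq_exp_ℂ]; exact NormedSpace.expSeries_div_hasSum_exp u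
  have hsum := (((hexp (a * x)).mul_right (b - c)).add ((hexp (b * x)).mul_right (c - a))).add
    ((hexp (c * x)).mul_right (a - b))
  rw [altExpSum, ← tsum_mul_right]
  refine HasSum.tsum_eq (hsum.congr_fun fun n => ?_)
  rw [mul_assoc, altPowCoeff_mul_Xi ha hb hc]
  ring

lemma differentiable_altExpSum (x p : ℂ) : Differentiable ℂ (altExpSum x p) := by
  intro q₀
  set R := ‖q₀‖ + 1
  set M := 1 + ‖p‖ + R
  have hbound : ∀ n, ∀ q ∈ Metric.ball (0 : ℂ) R,
      ‖x ^ n / n.factorial * altPowCoeff p q n‖ ≤ (‖x‖ * M) ^ n / n.factorial := by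
    intro n q hq
    have hq : ‖q‖ ≤ R := by simpa using (Metric.mem_ball.mp hq).le
    have hcoeff : ‖altPowCoeff p q n‖ ≤ M ^ n :=
      (norm_altPowCoeff_le p q n).trans (by gcongr; simp only [M]; linarith)
    rw [norm_mul, norm_div, norm_pow, Complex.norm_natCast, mul_pow, div_mul_eq_mul_div]
    gcongr
  have hdiff := Complex.differentiableOn_tsum_of_summable_norm
    (Real.summable_pow_div_factorial (‖x‖ * M))
    (fun n => ((differentiable_altPowCoeff p n).const_mul _).differentiableOn)
    Metric.isOpen_ball hbound
  exact hdiff.differentiableAt (Metric.isOpen_ball.mem_nhds (by simp [R]))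

end

theorem stmt4_general (L : ℝ) :
    ∃ G H : ℂ → ℂ, Differentiable ℂ G ∧ Differentiable ℂ H ∧
      ∀ z : ℂ, 27 * z ^ 2 ≠ 4 →
        ∀ l1 l2 l3 : ℂ, l1 + l2 + l3 = 0 → l1 * l2 + l2 * l3 + l3 * l1 = 1 →
          l1 * l2 * l3 = -Complex.I * z →
          G z * Xi l1 l2 l3 = Pfun L l1 l2 l3 ∧ H z * Xi l1 l2 l3 = detQ L l1 l2 l3 := by
  set G : ℂ → ℂ := fun z => altExpSum L 1 (I * z)
  have hG : Differentiable ℂ G := (differentiable_altExpSum L 1).comp (differentiable_id.const_mul I)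
  refine ⟨G, fun z => -G (-z), hG, (hG.comp differentiable_neg).neg, ?_⟩
  intro z _ l1 l2 l3 h₁ h₂ h₃
  obtain ⟨r1, r2, r3⟩ := roots_of_vieta (q := I * z) h₁ h₂ (by linear_combination h₃)
  obtain ⟨s1, s2, s3⟩ := roots_of_vieta (a := -l1) (b := -l2) (c := -l3) (p := 1) (q := I * -z)
    (by linear_combination -h₁) (by linear_combination h₂) (by linear_combination -h₃)
  constructor
  · rw [Pfun_eq]; exact altExpSum_mul_Xi _ r1 r2 r3
  · rw [detQ_eq_Pfun_neg L h₁, Pfun_eq, ← altExpSum_mul_Xi _ s1 s2 s3, Xi_neg]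
    ring

theorem stmt4 (L : ℝ) (hL : 0 < L) :
    ∃ G H : ℂ → ℂ, Differentiable ℂ G ∧ Differentiable ℂ H ∧
      ∀ z : ℂ, 27 * z ^ 2 ≠ 4 →
        ∀ l1 l2 l3 : ℂ, l1 + l2 + l3 = 0 → l1 * l2 + l2 * l3 + l3 * l1 = 1 →
          l1 * l2 * l3 = -Complex.I * z →
          G z * Xi l1 l2 l3 = Pfun L l1 l2 l3 ∧ H z * Xi l1 l2 l3 = detQ L l1 l2 l3 :=
  stmt4_general L
end

section
/- Let k, l be positive integers, let L = 2π√((k²+kl+l²)/3), and set λ₁ = −(2πi/(3L))(2k+l), λ₂ = λ₁ + 2πik/L, λ₃ = λ₂ + 2πil/L, and z = −(2k+l)(k−l)(2l+k)/(3√3 (k²+kl+l²)^{3/2}). Then: (i) λ_j³ + λ_j + iz = 0 for j = 1, 2, 3; (ii) λ₁, λ₂, λ₃ are pairwise distinct; (iii) e^{λ₁L} = e^{λ₂L} = e^{λ₃L}; and consequently (iv) (λ₂−λ₁)e^{−λ₃L} + (λ₃−λ₂)e^{−λ₁L} + (λ₁−λ₃)e^{−λ₂L} = 0, i.e., detQ(λ₁,λ₂,λ₃)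 = 0. -/
/-!
Consecutive `λⱼ` differ by `2πi n / L` with `n ∈ {k, l}` a positive integer, which gives both their
distinctness and `e^{λ₁L} = e^{λ₂L} = e^{λ₃L}`; the last two rows of the matrix of `detQ` are then
proportional to the first. Moreover `λ₁ + λ₂ + λ₃ = 0`, so the `λⱼ` are the roots of
`x³ + e₂ x - e₃` (`e₂`, `e₃` their elementary symmetric functions), and the normalisations of `L`
and `z` are exactly what makes `e₂ = 1` and `e₃ = -iz`.
-/

open Complex
open scoped Real

theorem cubic_eq_zero_of_add_eq_zero {R : Type*} [CommRing R] {a b c p q : R}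
    (hs : a + b + c = 0) (hp : a * b + b * c + c * a = p) (hq : a * b * c = -q) :
    a ^ 3 + p * a + q = 0 ∧ b ^ 3 + p * b + q = 0 ∧ c ^ 3 + p * c + q = 0 :=
  ⟨by linear_combination a ^ 2 * hs - a * hp + hq,
    by linear_combination b ^ 2 * hs - b * hp + hq,
    by linear_combination c ^ 2 * hs - c * hp + hq⟩

theorem three_mul_sq_of_eq_two_pi_mul_sqrt {m L : ℝ} (hm : 0 ≤ m) (hL : L = 2 * π * √(m / 3)) :
    3 * L ^ 2 = 4 * π ^ 2 * m := by
  rw [hL, mul_pow, Real.sq_sqrt (by positivity)]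
  ring

theorem mul_cube_of_eq_two_pi_mul_sqrt {m P L z : ℝ} (hm : 0 < m)
    (hL : L = 2 * π * √(m / 3)) (hz : z = -P / (3 * √3 * m ^ ((3 : ℝ) / 2))) :
    z * L ^ 3 = -(8 * π ^ 3 * P) / 27 := by
  have h32 : m ^ ((3 : ℝ) / 2) = √m ^ 3 := by
    rw [Real.rpow_div_two_eq_sqrt _ hm.le]
    norm_cast
  have hsqrt3 : √3 ^ 2 = 3 := Real.sq_sqrt (by norm_num)
  have hsqrtm : 0 < √m := Real.sqrt_pos.mpr hm
  rw [hz, hL, h32, Real.sqrt_div' _ (by norm_num : (0 : ℝ) ≤ 3)]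
  field_simp
  linear_combination 24 * P * (√3 ^ 2 + 3) * hsqrt3

theorem ne_add_two_pi_I_mul_div (a : ℂ) {n : ℕ} (hn : n ≠ 0) {L : ℝ} (hL : L ≠ 0) :
    a ≠ a + 2 * π * I * n / L := by
  simp [Real.pi_ne_zero, hn, hL]

theorem exp_add_two_pi_I_mul_div_mul (a : ℂ) (n : ℕ) {L : ℝ} (hL : L ≠ 0) :
    exp ((a + 2 * π * I * n / L) * L) = exp (a * L) := by
  have hL' : (L : ℂ) ≠ 0 := ofReal_ne_zero.mpr hL
  rw [show (a + 2 * π * I * n / L) * L = a * L + n * (2 * π * I) by field_simp,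
    exp_add, exp_nat_mul_two_pi_mul_I, mul_one]

theorem weighted_exp_neg_sum_eq_zero {L : ℝ} {a b c : ℂ}
    (hab : exp (a * L) = exp (b * L)) (hbc : exp (b * L) = exp (c * L)) :
    (b - a) * exp (-c * L) + (c - b) * exp (-a * L) + (a - c) * exp (-b * L) = 0 := by
  simp only [neg_mul, exp_neg, ← hbc, ← hab]
  ring

theorem detQ_eq_zero_of_exp_eq {L : ℝ} {a b c : ℂ}
    (hab : exp (a * L) = exp (b * L)) (hbc : exp (b * L) = exp (c * L)) :
    detQ L a b c = 0 := by
  rw [detQ, Matrix.det_fin_three]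
  simp [← hbc, ← hab]

section Eigenvalues

variable {k l : ℕ} {L z : ℝ} {lam₁ lam₂ lam₃ : ℂ}

theorem lam_sum_eq_zero
    (hlam₁ : lam₁ = -(2 * (π : ℂ) * I / (3 * L)) * (2 * k + l))
    (hlam₂ : lam₂ = lam₁ + 2 * (π : ℂ) * I * k / L)
    (hlam₃ : lam₃ = lam₂ + 2 * (π : ℂ) * I * l / L) :
    lam₁ + lam₂ + lam₃ = 0 := by
  subst hlam₃ hlam₂ hlam₁
  ring

theorem lam_pairwise_mul_sum_eq_one (hL0 : L ≠ 0)
    (hL : 3 * L ^ 2 = 4 * π ^ 2 * (k ^ 2 + k * l + l ^ 2))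
    (hlam₁ : lam₁ = -(2 * (π : ℂ) * I / (3 * L)) * (2 * k + l))
    (hlam₂ : lam₂ = lam₁ + 2 * (π : ℂ) * I * k / L)
    (hlam₃ : lam₃ = lam₂ + 2 * (π : ℂ) * I * l / L) :
    lam₁ * lam₂ + lam₂ * lam₃ + lam₃ * lam₁ = 1 := by
  have hL0' : (L : ℂ) ≠ 0 := ofReal_ne_zero.mpr hL0
  have hLC : 3 * (L : ℂ) ^ 2 = 4 * π ^ 2 * (k ^ 2 + k * l + l ^ 2) := by exact_mod_cast hL
  subst hlam₃ hlam₂ hlam₁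
  field_simp
  linear_combination (-3) * hLC - 12 * π ^ 2 * (k ^ 2 + k * l + l ^ 2) * I_sq

theorem lam_mul_mul_eq_neg_I_mul (hL0 : L ≠ 0)
    (hz : z * L ^ 3 = -(8 * π ^ 3 * ((2 * k + l) * (k - l) * (2 * l + k))) / 27)
    (hlam₁ : lam₁ = -(2 * (π : ℂ) * I / (3 * L)) * (2 * k + l))
    (hlam₂ : lam₂ = lam₁ + 2 * (π : ℂ) * I * k / L)
    (hlam₃ : lam₃ = lam₂ + 2 * (π : ℂ) * I * l / L) :
    lam₁ * lam₂ * lam₃ = -(I * z) := by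
  have hL0' : (L : ℂ) ≠ 0 := ofReal_ne_zero.mpr hL0
  have hzC : (z : ℂ) * L ^ 3 = -(8 * π ^ 3 * ((2 * k + l) * (k - l) * (2 * l + k))) / 27 := by
    exact_mod_cast hz
  subst hlam₃ hlam₂ hlam₁
  field_simp
  linear_combination 27 * hzC - 8 * π ^ 3 * ((2 * k + l) * (k - l) * (2 * l + k)) * I_sq

end Eigenvalues

theorem stmt9 (k l : ℕ) (hk : 0 < k) (hl : 0 < l)
    (L z : ℝ) (lam₁ lam₂ lam₃ : ℂ)
    (hLdef : L = 2 * Real.pi * Real.sqrt (((k : ℝ) ^ 2 + k * l + l ^ 2) / 3))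
    (hzdef : z = -((2 * (k : ℝ) + l) * ((k : ℝ) - l) * (2 * (l : ℝ) + k))
      / (3 * Real.sqrt 3 * ((k : ℝ) ^ 2 + k * l + l ^ 2) ^ ((3 : ℝ) / 2)))
    (hlam₁ : lam₁ = -(2 * (Real.pi : ℂ) * Complex.I / (3 * L)) * (2 * k + l))
    (hlam₂ : lam₂ = lam₁ + 2 * (Real.pi : ℂ) * Complex.I * k / L)
    (hlam₃ : lam₃ = lam₂ + 2 * (Real.pi : ℂ) * Complex.I * l / L) :
    (lam₁ ^ 3 + lam₁ + Complex.I * z = 0 ∧ lam₂ ^ 3 + lam₂ + Complex.I * z = 0 ∧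
        lam₃ ^ 3 + lam₃ + Complex.I * z = 0) ∧
      (lam₁ ≠ lam₂ ∧ lam₂ ≠ lam₃ ∧ lam₁ ≠ lam₃) ∧
      (Complex.exp (lam₁ * L) = Complex.exp (lam₂ * L) ∧
        Complex.exp (lam₂ * L) = Complex.exp (lam₃ * L)) ∧
      ((lam₂ - lam₁) * Complex.exp (-lam₃ * L) + (lam₃ - lam₂) * Complex.exp (-lam₁ * L)
          + (lam₁ - lam₃) * Complex.exp (-lam₂ * L) = 0 ∧
        detQ L lam₁ lam₂ lam₃ = 0) := by
  have hm : (0 : ℝ) < k ^ 2 + k * l + l ^ 2 := by positivity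
  have hL0 : L ≠ 0 := by
    rw [hLdef]
    exact mul_ne_zero (by positivity) (Real.sqrt_pos.mpr (by positivity)).ne'
  have hexp₁₂ : exp (lam₁ * L) = exp (lam₂ * L) := by
    rw [hlam₂, exp_add_two_pi_I_mul_div_mul _ _ hL0]
  have hexp₂₃ : exp (lam₂ * L) = exp (lam₃ * L) := by
    rw [hlam₃, exp_add_two_pi_I_mul_div_mul _ _ hL0]
  have hlam₁₃ : lam₃ = lam₁ + 2 * (π : ℂ) * I * (k + l : ℕ) / L := by
    rw [hlam₃, hlam₂]; push_cast; ring
  have hcubic := cubic_eq_zero_of_add_eq_zero (lam_sum_eq_zero hlam₁ hlam₂ hlam₃)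
    (lam_pairwise_mul_sum_eq_one hL0 (three_mul_sq_of_eq_two_pi_mul_sqrt hm.le hLdef)
      hlam₁ hlam₂ hlam₃)
    (lam_mul_mul_eq_neg_I_mul hL0 (mul_cube_of_eq_two_pi_mul_sqrt hm hLdef hzdef)
      hlam₁ hlam₂ hlam₃)
  refine ⟨by simpa only [one_mul] using hcubic, ⟨?_, ?_, ?_⟩, ⟨hexp₁₂, hexp₂₃⟩,
    weighted_exp_neg_sum_eq_zero hexp₁₂ hexp₂₃, detQ_eq_zero_of_exp_eq hexp₁₂ hexp₂₃⟩
  · exact hlam₂ ▸ ne_add_two_pi_I_mul_div _ hk.ne' hL0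
  · exact hlam₃ ▸ ne_add_two_pi_I_mul_div _ hl.ne' hL0
  · exact hlam₁₃ ▸ ne_add_two_pi_I_mul_div _ (by omega) hL0
end

section
/- Let k, l be positive integers with k ≥ l, let L = 2π√((k²+kl+l²)/3), and set λ₁ = −(2πi/(3L))(2k+l), λ₂ = λ₁ + 2πik/L, λ₃ = λ₂ + 2πil/L. Then 3λ_j² + 1 ≠ 0 for j = 1, 2, 3, and (λ₂−λ₁)/(3λ₃²+1) + (λ₃−λ₂)/(3λ₁²+1) + (λ₁−λ₃)/(3λ₂²+1) ≠ 0. (This is the key computation showing that the corresponding real zero of det Q is simple.) -/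
/-!
With `t = 2πi/L` the three exponents are `λ₁, λ₂, λ₃ = t·(-(2k+l)), t·(k-l), t·(k+2l)` divided by
`3`, and the choice of `L` says exactly that `t²(k² + kl + l²) = -3`. This relation turns
`3λⱼ² + 1` into `t²k(k+l)`, `-t²kl`, `t²l(k+l)`, and the cyclic sum collapses to
`(k² + l² + (k+l)²) / (t k l (k+l))`, which is visibly nonzero.
-/

open Complex Real

section Field

variable {F : Type*} [Field F] [CharZero F] {t a b : F}

theorem ne_zero_of_sq_mul_eq_neg_three (h : t ^ 2 * (a ^ 2 + a * b + b ^ 2) = -3) : t ≠ 0 := by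
  rintro rfl
  norm_num at h

theorem three_mul_sq_add_one_eq (h : t ^ 2 * (a ^ 2 + a * b + b ^ 2) = -3) :
    3 * (-(t * (2 * a + b)) / 3) ^ 2 + 1 = t ^ 2 * a * (a + b) ∧
      3 * (t * (a - b) / 3) ^ 2 + 1 = -(t ^ 2 * a * b) ∧
      3 * (t * (a + 2 * b) / 3) ^ 2 + 1 = t ^ 2 * b * (a + b) := by
  refine ⟨?_, ?_, ?_⟩ <;> linear_combination h / 3

theorem cyclic_sum_div_three_mul_sq_add_one {lam₁ lam₂ lam₃ : F}
    (h : t ^ 2 * (a ^ 2 + a * b + b ^ 2) = -3) (ha : a ≠ 0) (hb : b ≠ 0) (hab : a + b ≠ 0)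
    (h₁ : lam₁ = -(t * (2 * a + b)) / 3) (h₂ : lam₂ = t * (a - b) / 3)
    (h₃ : lam₃ = t * (a + 2 * b) / 3) :
    (lam₂ - lam₁) / (3 * lam₃ ^ 2 + 1) + (lam₃ - lam₂) / (3 * lam₁ ^ 2 + 1)
        + (lam₁ - lam₃) / (3 * lam₂ ^ 2 + 1)
      = (a ^ 2 + b ^ 2 + (a + b) ^ 2) / (t * a * b * (a + b)) := by
  have ht := ne_zero_of_sq_mul_eq_neg_three h
  obtain ⟨e₁, e₂, e₃⟩ := three_mul_sq_add_one_eq h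
  rw [h₁, h₂, h₃, e₁, e₂, e₃]
  field_simp
  ring

end Field

theorem two_pi_I_div_sq_mul_eq_neg_three {D L : ℝ} (hD : 0 < D) (hL : L = 2 * π * √(D / 3)) :
    (2 * π * I / L) ^ 2 * D = -3 := by
  have hL2 : (L : ℂ) ^ 2 = 4 * π ^ 2 * D / 3 := by
    have : L ^ 2 = 4 * π ^ 2 * D / 3 := by
      rw [hL, mul_pow, mul_pow, sq_sqrt (by positivity)]
      ring
    exact_mod_cast this
  have hπ : (π : ℂ) ≠ 0 := ofReal_ne_zero.mpr pi_ne_zero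
  have hD' : (D : ℂ) ≠ 0 := ofReal_ne_zero.mpr hD.ne'
  rw [div_pow, hL2, mul_pow, I_sq]
  field_simp
  ring

theorem stmt10_general (k l : ℕ) (hk : 0 < k) (hl : 0 < l)
    (L : ℝ) (lam₁ lam₂ lam₃ : ℂ)
    (hLdef : L = 2 * Real.pi * Real.sqrt (((k : ℝ) ^ 2 + k * l + l ^ 2) / 3))
    (hlam₁ : lam₁ = -(2 * (Real.pi : ℂ) * Complex.I / (3 * L)) * (2 * k + l))
    (hlam₂ : lam₂ = lam₁ + 2 * (Real.pi : ℂ) * Complex.I * k / L)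
    (hlam₃ : lam₃ = lam₂ + 2 * (Real.pi : ℂ) * Complex.I * l / L) :
    (3 * lam₁ ^ 2 + 1 ≠ 0 ∧ 3 * lam₂ ^ 2 + 1 ≠ 0 ∧ 3 * lam₃ ^ 2 + 1 ≠ 0) ∧
      (lam₂ - lam₁) / (3 * lam₃ ^ 2 + 1) + (lam₃ - lam₂) / (3 * lam₁ ^ 2 + 1)
          + (lam₁ - lam₃) / (3 * lam₂ ^ 2 + 1) ≠ 0 := by
  set t : ℂ := 2 * π * I / L
  have h : t ^ 2 * ((k : ℂ) ^ 2 + k * l + l ^ 2) = -3 := by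
    have := two_pi_I_div_sq_mul_eq_neg_three (by positivity) hLdef
    push_cast at this
    exact this
  have h₁ : lam₁ = -(t * (2 * k + l)) / 3 := by rw [hlam₁]; ring
  have h₂ : lam₂ = t * (k - l) / 3 := by rw [hlam₂, h₁]; ring
  have h₃ : lam₃ = t * (k + 2 * l) / 3 := by rw [hlam₃, h₂]; ring
  have ht := ne_zero_of_sq_mul_eq_neg_three h
  have hk' : (k : ℂ) ≠ 0 := by exact_mod_cast hk.ne'
  have hl' : (l : ℂ) ≠ 0 := by exact_mod_cast hl.ne'
  have hkl : (k : ℂ) + l ≠ 0 := by exact_mod_cast (by omega : k + l ≠ 0)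
  have hsq : (k : ℂ) ^ 2 + l ^ 2 + (k + l) ^ 2 ≠ 0 := by
    exact_mod_cast (by positivity : k ^ 2 + l ^ 2 + (k + l) ^ 2 ≠ 0)
  obtain ⟨e₁, e₂, e₃⟩ := three_mul_sq_add_one_eq h
  refine ⟨⟨?_, ?_, ?_⟩, ?_⟩
  · rw [h₁, e₁]; exact mul_ne_zero (by simp [ht, hk']) hkl
  · rw [h₂, e₂]; simp [ht, hk', hl']
  · rw [h₃, e₃]; exact mul_ne_zero (by simp [ht, hl']) hkl
  · rw [cyclic_sum_div_three_mul_sq_add_one h hk' hl' hkl h₁ h₂ h₃]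
    exact div_ne_zero hsq (by simp [ht, hk', hl', hkl])

theorem stmt10 (k l : ℕ) (hk : 0 < k) (hl : 0 < l) (hkl : l ≤ k)
    (L : ℝ) (lam₁ lam₂ lam₃ : ℂ)
    (hLdef : L = 2 * Real.pi * Real.sqrt (((k : ℝ) ^ 2 + k * l + l ^ 2) / 3))
    (hlam₁ : lam₁ = -(2 * (Real.pi : ℂ) * Complex.I / (3 * L)) * (2 * k + l))
    (hlam₂ : lam₂ = lam₁ + 2 * (Real.pi : ℂ) * Complex.I * k / L)
    (hlam₃ : lam₃ = lam₂ + 2 * (Real.pi : ℂ) * Complex.I * l / L) :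
    (3 * lam₁ ^ 2 + 1 ≠ 0 ∧ 3 * lam₂ ^ 2 + 1 ≠ 0 ∧ 3 * lam₃ ^ 2 + 1 ≠ 0) ∧
      (lam₂ - lam₁) / (3 * lam₃ ^ 2 + 1) + (lam₃ - lam₂) / (3 * lam₁ ^ 2 + 1)
          + (lam₁ - lam₃) / (3 * lam₂ ^ 2 + 1) ≠ 0 :=
  stmt10_general k l hk hl L lam₁ lam₂ lam₃ hLdef hlam₁ hlam₂ hlam₃
end

section
/- Let L > 0, z ∈ ℂ, and let λ₁, λ₂, λ₃ ∈ ℂ be pairwise distinct with λ₁+λ₂+λ₃ = 0, λ₁λ₂+λ₂λ₃+λ₃λ₁ = 1, and λ_j³ + λ_j + iz = 0 for j = 1, 2, 3. Assume that (λ₂−λ₁)e^{−λ₃L} + (λ₃−λ₂)e^{−λ₁L} + (λ₁−λ₃)e^{−λ₂L} = 0 (i.e., detQ = 0) and λ₁(e^{λ₃L}−e^{λ₂L}) + λ₂(e^{λ₁L}−e^{λ₃L}) + λ₃(e^{λ₂L}−e^{λ₁L}) = 0 (i.e., P = 0). Then e^{(λ₃−λ₁)L} = 1 and e^{(λ₃−λ₂)L}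 = 1; consequently 3λ₃ ∈ (2πi/L)·ℤ and z is a real number. -/
/-! Since `λ₁ + λ₂ + λ₃ = 0`, we have `e^{-λ₃L} = e^{λ₁L} e^{λ₂L}` and cyclically. With
`cⱼ := λᵢ - λₖ` for `(i, j, k)` a cyclic permutation of `(1, 2, 3)`, the conditions `P = 0`
and `detQ = 0` say that the vector `(c₁, c₂, c₃)`, whose entries are nonzero and sum to `0`, is
orthogonal to `(1, 1, 1)`, `(eⱼ)` and `(eᵢ eₖ)`, where `eⱼ := e^{λⱼL}`. These three vectors are
therefore linearly dependent, which forces `(e₁ - e₂)(e₂ - e₃)(e₃ - e₁) = 0`, and two equal `eⱼ` force the third to agree with them.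
Then `e^{3λ₃L} = e^{(λ₃-λ₁)L} e^{(λ₃-λ₂)L} = 1`, so `λ₃` is purely imaginary, and a purely
imaginary root of `λ³ + λ + iz` makes `z` real. -/

open Complex

section ThreeTermRelations

variable {K : Type*} [Field K] {c₁ c₂ c₃ e₁ e₂ e₃ : K}

lemma eq_of_eq_of_linear_relation (hc : c₁ + c₂ + c₃ = 0)
    (hlin : c₁ * e₁ + c₂ * e₂ + c₃ * e₃ = 0) (h₃ : c₃ ≠ 0) (h : e₁ = e₂) : e₃ = e₁ := by
  have : c₃ * (e₃ - e₁) = 0 := by linear_combination hlin - e₁ * hc + c₂ * h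
  exact sub_eq_zero.mp ((mul_eq_zero.mp this).resolve_left h₃)

lemma mul_sub_mul_sub_mul_sub_eq_zero_of_relations (hc : c₁ + c₂ + c₃ = 0)
    (hlin : c₁ * e₁ + c₂ * e₂ + c₃ * e₃ = 0)
    (hquad : c₁ * (e₂ * e₃) + c₂ * (e₃ * e₁) + c₃ * (e₁ * e₂) = 0) (h₃ : c₃ ≠ 0) :
    (e₁ - e₂) * (e₂ - e₃) * (e₃ - e₁) = 0 := by
  have : c₃ * ((e₁ - e₂) * (e₂ - e₃) * (e₃ - e₁)) = 0 := by
    linear_combination ((e₁ - e₂) * (e₂ - e₃) * (e₃ - e₁) - (e₃ ^ 2 + e₁ * e₂) * (e₂ - e₁)) * hc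
      + e₃ * (e₂ - e₁) * hlin + (e₂ - e₁) * hquad
  exact (mul_eq_zero.mp this).resolve_left h₃

lemma eq_and_eq_of_relations (hc : c₁ + c₂ + c₃ = 0)
    (hlin : c₁ * e₁ + c₂ * e₂ + c₃ * e₃ = 0)
    (hquad : c₁ * (e₂ * e₃) + c₂ * (e₃ * e₁) + c₃ * (e₁ * e₂) = 0)
    (h₁ : c₁ ≠ 0) (h₂ : c₂ ≠ 0) (h₃ : c₃ ≠ 0) : e₁ = e₂ ∧ e₂ = e₃ := by
  have hc' : c₂ + c₃ + c₁ = 0 := by linear_combination hc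
  have hlin' : c₂ * e₂ + c₃ * e₃ + c₁ * e₁ = 0 := by linear_combination hlin
  have hc'' : c₃ + c₁ + c₂ = 0 := by linear_combination hc
  have hlin'' : c₃ * e₃ + c₁ * e₁ + c₂ * e₂ = 0 := by linear_combination hlin
  rcases mul_eq_zero.mp (mul_sub_mul_sub_mul_sub_eq_zero_of_relations hc hlin hquad h₃)
    with h | h31
  · rcases mul_eq_zero.mp h with h12 | h23
    · obtain rfl := sub_eq_zero.mp h12
      exact ⟨rfl, (eq_of_eq_of_linear_relation hc hlin h₃ rfl).symm⟩
    · obtain rfl := sub_eq_zero.mp h23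
      exact ⟨eq_of_eq_of_linear_relation hc' hlin' h₁ rfl, rfl⟩
  · obtain rfl := sub_eq_zero.mp h31
    have h := eq_of_eq_of_linear_relation hc'' hlin'' h₂ rfl
    exact ⟨h.symm, h⟩

end ThreeTermRelations

lemma exp_neg_mul_eq_exp_mul_mul_exp_mul {a b c : ℂ} (h : a + b + c = 0) (x : ℂ) :
    exp (-c * x) = exp (a * x) * exp (b * x) := by
  rw [← exp_add]
  congr 1
  linear_combination -x * h

lemma exp_mul_eq_of_detQ_eq_zero_of_P_eq_zero {L lam₁ lam₂ lam₃ : ℂ}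
    (hne₁₂ : lam₁ ≠ lam₂) (hne₂₃ : lam₂ ≠ lam₃) (hne₁₃ : lam₁ ≠ lam₃)
    (hsum : lam₁ + lam₂ + lam₃ = 0)
    (hdetQ : (lam₂ - lam₁) * exp (-lam₃ * L) + (lam₃ - lam₂) * exp (-lam₁ * L)
      + (lam₁ - lam₃) * exp (-lam₂ * L) = 0)
    (hP : lam₁ * (exp (lam₃ * L) - exp (lam₂ * L)) + lam₂ * (exp (lam₁ * L) - exp (lam₃ * L))
      + lam₃ * (exp (lam₂ * L) - exp (lam₁ * L)) = 0) :
    exp (lam₁ * L) = exp (lam₂ * L) ∧ exp (lam₂ * L) = exp (lam₃ * L) := by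
  rw [exp_neg_mul_eq_exp_mul_mul_exp_mul hsum,
    exp_neg_mul_eq_exp_mul_mul_exp_mul (by linear_combination hsum : lam₂ + lam₃ + lam₁ = 0),
    exp_neg_mul_eq_exp_mul_mul_exp_mul (by linear_combination hsum : lam₃ + lam₁ + lam₂ = 0)]
    at hdetQ
  refine eq_and_eq_of_relations (c₁ := lam₃ - lam₂) (c₂ := lam₁ - lam₃) (c₃ := lam₂ - lam₁)
    (by ring) (by linear_combination -hP) (by linear_combination hdetQ)
    (sub_ne_zero.mpr hne₂₃.symm) (sub_ne_zero.mpr hne₁₃) (sub_ne_zero.mpr hne₁₂.symm)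

lemma exp_sub_mul_eq_one {a b x : ℂ} (h : exp (a * x) = exp (b * x)) :
    exp ((b - a) * x) = 1 := by
  rw [sub_mul, exp_sub, h, div_self (exp_ne_zero _)]

lemma exists_int_eq_of_exp_mul_eq_one {w L : ℂ} (hL : L ≠ 0) (h : exp (w * L) = 1) :
    ∃ n : ℤ, w = 2 * (Real.pi : ℂ) * I * n / L := by
  obtain ⟨n, hn⟩ := exp_eq_one_iff.mp h
  exact ⟨n, by field_simp; linear_combination hn⟩

lemma im_eq_zero_of_cubic_root_of_re_eq_zero {lam z : ℂ} (hre : lam.re = 0)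
    (hroot : lam ^ 3 + lam + I * z = 0) : z.im = 0 := by
  have hlam : lam = lam.im * I := by simpa [hre] using (re_add_im lam).symm
  have hz : z = ((lam.im ^ 3 - lam.im : ℝ) : ℂ) := by
    rw [hlam] at hroot
    push_cast
    linear_combination -I * hroot + (z + lam.im + lam.im ^ 3 * (I ^ 2 - 1)) * I_sq
  rw [hz, ofReal_im]

theorem stmt11_general (L : ℝ) (hL : 0 < L) (z : ℂ) (lam₁ lam₂ lam₃ : ℂ)
    (hne₁₂ : lam₁ ≠ lam₂) (hne₂₃ : lam₂ ≠ lam₃) (hne₁₃ : lam₁ ≠ lam₃)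
    (hsum : lam₁ + lam₂ + lam₃ = 0)
    (hroot₃ : lam₃ ^ 3 + lam₃ + Complex.I * z = 0)
    (hdetQ : (lam₂ - lam₁) * Complex.exp (-lam₃ * L) + (lam₃ - lam₂) * Complex.exp (-lam₁ * L)
      + (lam₁ - lam₃) * Complex.exp (-lam₂ * L) = 0)
    (hP : lam₁ * (Complex.exp (lam₃ * L) - Complex.exp (lam₂ * L))
      + lam₂ * (Complex.exp (lam₁ * L) - Complex.exp (lam₃ * L))
      + lam₃ * (Complex.exp (lam₂ * L) - Complex.exp (lam₁ * L)) = 0) :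
    Complex.exp ((lam₃ - lam₁) * L) = 1 ∧ Complex.exp ((lam₃ - lam₂) * L) = 1 ∧
      (∃ n : ℤ, 3 * lam₃ = 2 * (Real.pi : ℂ) * Complex.I * n / L) ∧ z.im = 0 := by
  obtain ⟨h₁₂, h₂₃⟩ := exp_mul_eq_of_detQ_eq_zero_of_P_eq_zero hne₁₂ hne₂₃ hne₁₃ hsum hdetQ hP
  have h₃₁ := exp_sub_mul_eq_one (h₁₂.trans h₂₃)
  have h₃₂ := exp_sub_mul_eq_one h₂₃
  have h₃ : exp (3 * lam₃ * L) = 1 := by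
    rw [show 3 * lam₃ * L = (lam₃ - lam₁) * L + (lam₃ - lam₂) * L by
      linear_combination (L : ℂ) * hsum, exp_add, h₃₁, h₃₂, one_mul]
  obtain ⟨n, hn⟩ := exists_int_eq_of_exp_mul_eq_one (ofReal_ne_zero.mpr hL.ne') h₃
  have hre : lam₃.re = 0 := by simpa using congrArg re hn
  exact ⟨h₃₁, h₃₂, ⟨n, hn⟩, im_eq_zero_of_cubic_root_of_re_eq_zero hre hroot₃⟩

theorem stmt11 (L : ℝ) (hL : 0 < L) (z : ℂ) (lam₁ lam₂ lam₃ : ℂ)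
    (hne₁₂ : lam₁ ≠ lam₂) (hne₂₃ : lam₂ ≠ lam₃) (hne₁₃ : lam₁ ≠ lam₃)
    (hsum : lam₁ + lam₂ + lam₃ = 0)
    (hsym : lam₁ * lam₂ + lam₂ * lam₃ + lam₃ * lam₁ = 1)
    (hroot₁ : lam₁ ^ 3 + lam₁ + Complex.I * z = 0)
    (hroot₂ : lam₂ ^ 3 + lam₂ + Complex.I * z = 0)
    (hroot₃ : lam₃ ^ 3 + lam₃ + Complex.I * z = 0)
    (hdetQ : (lam₂ - lam₁) * Complex.exp (-lam₃ * L) + (lam₃ - lam₂) * Complex.exp (-lam₁ * L)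
      + (lam₁ - lam₃) * Complex.exp (-lam₂ * L) = 0)
    (hP : lam₁ * (Complex.exp (lam₃ * L) - Complex.exp (lam₂ * L))
      + lam₂ * (Complex.exp (lam₁ * L) - Complex.exp (lam₃ * L))
      + lam₃ * (Complex.exp (lam₂ * L) - Complex.exp (lam₁ * L)) = 0) :
    Complex.exp ((lam₃ - lam₁) * L) = 1 ∧ Complex.exp ((lam₃ - lam₂) * L) = 1 ∧
      (∃ n : ℤ, 3 * lam₃ = 2 * (Real.pi : ℂ) * Complex.I * n / L) ∧ z.im = 0 :=
  stmt11_general L hL z lam₁ lam₂ lam₃ hne₁₂ hne₂₃ hne₁₃ hsum hroot₃ hdetQ hP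
end

section
/- Let T > 0, let u : [0,T] → ℝ be continuous, and let y₁, y₂, y₃ : [0,T] → ℝ be continuously differentiable with y₁'(t) = u(t), y₂'(t) = y₃(t), y₃'(t) = −y₂(t) + 2y₁(t)u(t) for all t ∈ [0,T], and y₁(0) = y₂(0) = y₃(0) = 0. Then y₂(T) = ∫₀^T cos(T−t)·y₁(t)² dt and y₃(T) = y₁(T)² − ∫₀^T sin(T−t)·y₁(t)² dt. -/
open Set

/-! Put `z = y₃ - y₁²`. Then `y₂' = z + y₁²` and `z' = -y₂`: the pair `(y₂, z)` is a harmonic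
oscillator forced by `y₁²` in its first component, started at rest. Variation of constants, i.e.
differentiating `cos (T - t) y₂ + sin (T - t) z` and `cos (T - t) z - sin (T - t) y₂`, gives the
two formulas. -/

theorem integral_eq_sub_of_hasDerivWithinAt_Icc {E : Type*} [NormedAddCommGroup E]
    [NormedSpace ℝ E] [CompleteSpace E] {a b : ℝ} {F f : ℝ → E} (hab : a ≤ b)
    (hF : ∀ t ∈ Icc a b, HasDerivWithinAt F (f t) (Icc a b) t)
    (hf : IntervalIntegrable f MeasureTheory.volume a b) :
    ∫ t in a..b, f t = F b - F a :=
  intervalIntegral.integral_eq_sub_of_hasDeriv_right_of_le hab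
    (fun t ht => (hF t ht).continuousWithinAt)
    (fun t ht => ((hF t (Ioo_subset_Icc_self ht)).hasDerivAt
      (Icc_mem_nhds ht.1 ht.2)).hasDerivWithinAt) hf

section ForcedOscillator

open Real

variable {a b : ℝ} {x z f : ℝ → ℝ}

theorem hasDerivAt_cos_const_sub (b t : ℝ) :
    HasDerivAt (fun s => cos (b - s)) (sin (b - t)) t := by
  simpa using ((hasDerivAt_id t).const_sub b).cos

theorem hasDerivAt_sin_const_sub (b t : ℝ) :
    HasDerivAt (fun s => sin (b - s)) (-cos (b - t)) t := by
  simpa using ((hasDerivAt_id t).const_sub b).sin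

variable (hab : a ≤ b) (hx : ∀ t ∈ Icc a b, HasDerivWithinAt x (z t + f t) (Icc a b) t)
  (hz : ∀ t ∈ Icc a b, HasDerivWithinAt z (-x t) (Icc a b) t) (hf : ContinuousOn f (Icc a b))
include hab hx hz hf

theorem forcedOscillator_fst_eq :
    x b = cos (b - a) * x a + sin (b - a) * z a + ∫ t in a..b, cos (b - t) * f t := by
  have hderiv : ∀ t ∈ Icc a b, HasDerivWithinAt (fun s => cos (b - s) * x s + sin (b - s) * z s)
      (cos (b - t) * f t) (Icc a b) t := by
    intro t ht
    refine (((hasDerivAt_cos_const_sub b t).hasDerivWithinAt.mul (hx t ht)).add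
      ((hasDerivAt_sin_const_sub b t).hasDerivWithinAt.mul (hz t ht))).congr_deriv ?_
    ring
  have hint : IntervalIntegrable (fun t => cos (b - t) * f t) MeasureTheory.volume a b :=
    ((by fun_prop : Continuous fun t => cos (b - t)).continuousOn.mul hf).intervalIntegrable_of_Icc
      hab
  rw [integral_eq_sub_of_hasDerivWithinAt_Icc hab hderiv hint]
  simp

theorem forcedOscillator_snd_eq :
    z b = cos (b - a) * z a - sin (b - a) * x a - ∫ t in a..b, sin (b - t) * f t := by
  have hderiv : ∀ t ∈ Icc a b, HasDerivWithinAt (fun s => cos (b - s) * z s - sin (b - s) * x s)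
      (-(sin (b - t) * f t)) (Icc a b) t := by
    intro t ht
    refine (((hasDerivAt_cos_const_sub b t).hasDerivWithinAt.mul (hz t ht)).sub
      ((hasDerivAt_sin_const_sub b t).hasDerivWithinAt.mul (hx t ht))).congr_deriv ?_
    ring
  have hint : IntervalIntegrable (fun t => sin (b - t) * f t) MeasureTheory.volume a b :=
    ((by fun_prop : Continuous fun t => sin (b - t)).continuousOn.mul hf).intervalIntegrable_of_Icc
      hab
  have := integral_eq_sub_of_hasDerivWithinAt_Icc hab hderiv hint.neg
  simp only [intervalIntegral.integral_neg, sub_self, sin_zero, cos_zero] at this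
  linarith

end ForcedOscillator

theorem stmt13_general (T : ℝ) (hT : 0 < T) (u y₁ y₂ y₃ : ℝ → ℝ)
    (hd₁ : ∀ t ∈ Icc 0 T, HasDerivWithinAt y₁ (u t) (Icc 0 T) t)
    (hd₂ : ∀ t ∈ Icc 0 T, HasDerivWithinAt y₂ (y₃ t) (Icc 0 T) t)
    (hd₃ : ∀ t ∈ Icc 0 T, HasDerivWithinAt y₃ (-y₂ t + 2 * y₁ t * u t) (Icc 0 T) t)
    (hi₁ : y₁ 0 = 0) (hi₂ : y₂ 0 = 0) (hi₃ : y₃ 0 = 0) :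
    y₂ T = ∫ t in (0:ℝ)..T, Real.cos (T - t) * (y₁ t) ^ 2 ∧
      y₃ T = (y₁ T) ^ 2 - ∫ t in (0:ℝ)..T, Real.sin (T - t) * (y₁ t) ^ 2 := by
  have hsq : ContinuousOn (fun t => y₁ t ^ 2) (Icc 0 T) :=
    ContinuousOn.pow (fun t ht => (hd₁ t ht).continuousWithinAt) 2
  have hx : ∀ t ∈ Icc 0 T, HasDerivWithinAt y₂ ((y₃ t - y₁ t ^ 2) + y₁ t ^ 2) (Icc 0 T) t := by
    simpa using hd₂
  have hz : ∀ t ∈ Icc 0 T, HasDerivWithinAt (fun s => y₃ s - y₁ s ^ 2) (-y₂ t) (Icc 0 T) t := by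
    intro t ht
    refine ((hd₃ t ht).sub ((hd₁ t ht).pow 2)).congr_deriv ?_
    push_cast
    ring
  have h₂ := forcedOscillator_fst_eq hT.le hx hz hsq
  have h₃ := forcedOscillator_snd_eq hT.le hx hz hsq
  rw [hi₁, hi₂, hi₃] at h₂ h₃
  constructor <;> linarith

theorem stmt13 (T : ℝ) (hT : 0 < T) (u y₁ y₂ y₃ : ℝ → ℝ)
    (hu : ContinuousOn u (Icc 0 T))
    (hd₁ : ∀ t ∈ Icc 0 T, HasDerivWithinAt y₁ (u t) (Icc 0 T) t)
    (hd₂ : ∀ t ∈ Icc 0 T, HasDerivWithinAt y₂ (y₃ t) (Icc 0 T) t)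
    (hd₃ : ∀ t ∈ Icc 0 T, HasDerivWithinAt y₃ (-y₂ t + 2 * y₁ t * u t) (Icc 0 T) t)
    (hi₁ : y₁ 0 = 0) (hi₂ : y₂ 0 = 0) (hi₃ : y₃ 0 = 0) :
    y₂ T = ∫ t in (0:ℝ)..T, Real.cos (T - t) * (y₁ t) ^ 2 ∧
      y₃ T = (y₁ T) ^ 2 - ∫ t in (0:ℝ)..T, Real.sin (T - t) * (y₁ t) ^ 2 :=
  stmt13_general T hT u y₁ y₂ y₃ hd₁ hd₂ hd₃ hi₁ hi₂ hi₃
end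

section
/- Let L > 0, p ∈ ℝ, and let η₁, η₂, η₃ ∈ ℂ satisfy η_j³ + η_j = ip for j = 1, 2, 3 and e^{η₁L} = e^{η₂L} = e^{η₃L}. Define Ψ : ℝ × ℝ → ℂ by Ψ(t,x) = e^{−ipt}·((η₂−η₁)e^{η₃x} + (η₃−η₂)e^{η₁x} + (η₁−η₃)e^{η₂x}). Then ∂_tΨ(t,x) + ∂_xΨ(t,x) + ∂_x³Ψ(t,x) = 0 for all (t,x) ∈ ℝ², and Ψ(t,0) = Ψ(t,L) = ∂_xΨ(t,0) = ∂_xΨ(t,L) = 0 for all t ∈ ℝ. (So Ψ is a solution of the linear KdV equation with vanishing Dirichlet and Neumann boundary data at x = 0 and x = L.) -/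
/-!
Each term `e^{-ipt + η x}` with `η³ + η = ip` solves `∂_t u + ∂_x u + ∂_x³ u = 0`, hence so does
`Ψ`. The coefficients `η₂ - η₁, η₃ - η₂, η₁ - η₃` sum to zero, and so do their products with the
matching exponents `η₃, η₁, η₂`. At `x = 0` and at `x = L` the three exponentials coincide, so `Ψ`
and `∂_x Ψ` there are a common factor times these vanishing sums.
-/

open Complex

lemma hasDerivAt_cexp_mul_ofReal (a : ℂ) (x : ℝ) :
    HasDerivAt (fun y : ℝ => cexp (a * y)) (a * cexp (a * x)) x := by
  have h : HasDerivAt (fun z : ℂ => cexp (a * z)) (cexp (a * x) * a) x :=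
    (Complex.hasDerivAt_exp _).comp _ ((hasDerivAt_id _).const_mul a |>.congr_deriv (mul_one a))
  exact (h.congr_deriv (mul_comm _ _)).comp_ofReal

section ExpPoly

variable {ι : Type*} [Fintype ι]

noncomputable def expPoly (c η : ι → ℂ) (x : ℝ) : ℂ :=
  ∑ j, c j * cexp (η j * x)

lemma hasDerivAt_expPoly (c η : ι → ℂ) (x : ℝ) :
    HasDerivAt (expPoly c η) (expPoly (fun j => c j * η j) η x) x := by
  unfold expPoly
  refine HasDerivAt.fun_sum fun j _ => ?_
  simpa only [mul_assoc] using (hasDerivAt_cexp_mul_ofReal (η j) x).const_mul (c j)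

lemma deriv_expPoly (c η : ι → ℂ) :
    deriv (expPoly c η) = expPoly (fun j => c j * η j) η :=
  funext fun x => (hasDerivAt_expPoly c η x).deriv

lemma expPoly_eq_zero_of_cexp_eq {c η : ι → ℂ} {x : ℝ} {E : ℂ} (hc : ∑ j, c j = 0)
    (hE : ∀ j, cexp (η j * x) = E) : expPoly c η x = 0 := by
  simp only [expPoly, hE, ← Finset.sum_mul, hc, zero_mul]

lemma linearKdV_expPoly {c η : ι → ℂ} {p : ℝ} (hη : ∀ j, η j ^ 3 + η j = I * p) (t x : ℝ) :
    deriv (fun s : ℝ => cexp (-I * p * s) * expPoly c η x) t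
      + deriv (fun y => cexp (-I * p * t) * expPoly c η y) x
      + deriv (deriv (deriv fun y => cexp (-I * p * t) * expPoly c η y)) x = 0 := by
  rw [((hasDerivAt_cexp_mul_ofReal _ t).mul_const _).deriv]
  simp only [deriv_const_mul_field', deriv_expPoly]
  simp only [expPoly, Finset.mul_sum, ← Finset.sum_add_distrib]
  refine Finset.sum_eq_zero fun j _ => ?_
  linear_combination cexp (-I * p * t) * c j * cexp (η j * x) * hη j

end ExpPoly

theorem stmt16_general (L : ℝ) (p : ℝ) (η₁ η₂ η₃ : ℂ)
    (hr₁ : η₁ ^ 3 + η₁ = Complex.I * p)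
    (hr₂ : η₂ ^ 3 + η₂ = Complex.I * p)
    (hr₃ : η₃ ^ 3 + η₃ = Complex.I * p)
    (hexp₁₂ : Complex.exp (η₁ * L) = Complex.exp (η₂ * L))
    (hexp₂₃ : Complex.exp (η₂ * L) = Complex.exp (η₃ * L))
    (Ψ : ℝ → ℝ → ℂ)
    (hΨ : ∀ t x : ℝ, Ψ t x = Complex.exp (-Complex.I * p * t) *
      ((η₂ - η₁) * Complex.exp (η₃ * x) + (η₃ - η₂) * Complex.exp (η₁ * x)
        + (η₁ - η₃) * Complex.exp (η₂ * x))) :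
    (∀ t x : ℝ,
      deriv (fun s => Ψ s x) t + deriv (Ψ t) x + deriv (deriv (deriv (Ψ t))) x = 0) ∧
    (∀ t : ℝ, Ψ t 0 = 0 ∧ Ψ t L = 0 ∧ deriv (Ψ t) 0 = 0 ∧ deriv (Ψ t) L = 0) := by
  set c : Fin 3 → ℂ := ![η₂ - η₁, η₃ - η₂, η₁ - η₃]
  set η : Fin 3 → ℂ := ![η₃, η₁, η₂]
  obtain rfl : Ψ = fun (t : ℝ) x => cexp (-I * p * t) * expPoly c η x := by
    ext t x
    simp [hΨ, expPoly, Fin.sum_univ_three, c, η, add_comm]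
  have hη : ∀ j, η j ^ 3 + η j = I * p := by
    simp [Fin.forall_fin_succ, η, hr₁, hr₂, hr₃]
  have hc : ∑ j, c j = 0 := by
    simp [Fin.sum_univ_three, c]
  have hcη : ∑ j, c j * η j = 0 := by
    simp only [Fin.sum_univ_three, c, η, Matrix.cons_val]
    ring
  have hE₀ : ∀ j, cexp (η j * (0 : ℝ)) = 1 := by simp
  have hE_L : ∀ j, cexp (η j * L) = cexp (η₃ * L) := by
    simp [Fin.forall_fin_succ, η, hexp₁₂, hexp₂₃]
  refine ⟨linearKdV_expPoly hη, fun t => ?_⟩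
  simp only [deriv_const_mul_field', deriv_expPoly, expPoly_eq_zero_of_cexp_eq hc hE₀,
    expPoly_eq_zero_of_cexp_eq hc hE_L, expPoly_eq_zero_of_cexp_eq hcη hE₀,
    expPoly_eq_zero_of_cexp_eq hcη hE_L, mul_zero, and_self]

theorem stmt16 (L : ℝ) (hL : 0 < L) (p : ℝ) (η₁ η₂ η₃ : ℂ)
    (hr₁ : η₁ ^ 3 + η₁ = Complex.I * p)
    (hr₂ : η₂ ^ 3 + η₂ = Complex.I * p)
    (hr₃ : η₃ ^ 3 + η₃ = Complex.I * p)
    (hexp₁₂ : Complex.exp (η₁ * L) = Complex.exp (η₂ * L))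
    (hexp₂₃ : Complex.exp (η₂ * L) = Complex.exp (η₃ * L))
    (Ψ : ℝ → ℝ → ℂ)
    (hΨ : ∀ t x : ℝ, Ψ t x = Complex.exp (-Complex.I * p * t) *
      ((η₂ - η₁) * Complex.exp (η₃ * x) + (η₃ - η₂) * Complex.exp (η₁ * x)
        + (η₁ - η₃) * Complex.exp (η₂ * x))) :
    (∀ t x : ℝ,
      deriv (fun s => Ψ s x) t + deriv (Ψ t) x + deriv (deriv (deriv (Ψ t))) x = 0) ∧
    (∀ t : ℝ, Ψ t 0 = 0 ∧ Ψ t L = 0 ∧ deriv (Ψ t) 0 = 0 ∧ deriv (Ψ t) L = 0) :=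
  stmt16_general L p η₁ η₂ η₃ hr₁ hr₂ hr₃ hexp₁₂ hexp₂₃ Ψ hΨ
end

section
/- Let L > 0, T > 0. Let y : [0,T] × [0,L] → ℝ be continuous, once continuously differentiable in t and three times continuously differentiable in x (with all these partial derivatives jointly continuous), satisfying ∂_t y + ∂_x y + ∂_x³ y + y·∂_x y = 0 on [0,T] × [0,L] and y(t,0) = y(t,L) = 0 for all t ∈ [0,T]. Let Ψ : [0,T] × [0,L] → ℝ have the same regularity and satisfy ∂_t Ψ + ∂_x Ψ + ∂_x³ Ψ = 0 on [0,T] × [0,L] and Ψ(t,0) = Ψ(t,L) = ∂_xΨ(t,0) = ∂_xΨ(t,L) = 0 for all t ∈ [0,T]. Then ∫₀^L y(T,x)Ψ(T,x) dx − ∫₀^L y(0,x)Ψ(0,x) dx = (1/2)·∫₀^T ∫₀^L y(t,x)²·∂_xΨ(t,x) dx dt. -/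
/-!
Multiply the equation for `y` by `Ψ` and the equation for `Ψ` by `y`. In time, `∂_t (yΨ)`
integrates to the left-hand side. In space, after the substitution `y_t = -(y_x + y_xxx + y y_x)`,
`Ψ_t = -(Ψ_x + Ψ_xxx)`, the integrand `y_t Ψ + y Ψ_t - ½ y² Ψ_x` is the exact derivative of
`-(yΨ + y_xx Ψ - y_x Ψ_x + y Ψ_xx + ½ y² Ψ)`, which vanishes at `x = 0, L` because
`y = Ψ = Ψ_x = 0` there. Fubini exchanges the two integrations.
-/

open Set MeasureTheory Function

namespace intervalIntegral

variable {E : Type*} [NormedAddCommGroup E] [NormedSpace ℝ E]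

theorem integral_eq_sub_of_hasDerivWithinAt_of_le [CompleteSpace E] {a b : ℝ} (hab : a ≤ b)
    {f f' : ℝ → E} (hderiv : ∀ x ∈ Icc a b, HasDerivWithinAt f (f' x) (Icc a b) x)
    (hint : IntervalIntegrable f' volume a b) :
    ∫ x in a..b, f' x = f b - f a :=
  integral_eq_sub_of_hasDerivAt_of_le hab (fun x hx => (hderiv x hx).continuousWithinAt)
    (fun x hx => (hderiv x (Ioo_subset_Icc_self hx)).hasDerivAt (Icc_mem_nhds hx.1 hx.2)) hint

theorem integral_integral_swap_of_continuousOn {f : ℝ → ℝ → E} {a b c d : ℝ}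
    (hab : a ≤ b) (hcd : c ≤ d) (hf : ContinuousOn (uncurry f) (Icc a b ×ˢ Icc c d)) :
    ∫ x in a..b, ∫ y in c..d, f x y = ∫ y in c..d, ∫ x in a..b, f x y := by
  simp only [integral_of_le hab, integral_of_le hcd]
  apply integral_integral_swap
  rw [Measure.prod_restrict, ← Measure.volume_eq_prod]
  exact (hf.integrableOn_compact (isCompact_Icc.prod isCompact_Icc)).mono_set
    (prod_mono Ioc_subset_Icc_self Ioc_subset_Icc_self)

end intervalIntegral

section KdVPairing

variable {f f₁ f₂ f₃ g g₁ g₂ g₃ : ℝ → ℝ}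

theorem hasDerivWithinAt_kdv_flux {s : Set ℝ} {x : ℝ}
    (hf : HasDerivWithinAt f (f₁ x) s x) (hf₁ : HasDerivWithinAt f₁ (f₂ x) s x)
    (hf₂ : HasDerivWithinAt f₂ (f₃ x) s x) (hg : HasDerivWithinAt g (g₁ x) s x)
    (hg₁ : HasDerivWithinAt g₁ (g₂ x) s x) (hg₂ : HasDerivWithinAt g₂ (g₃ x) s x) :
    HasDerivWithinAt
      (fun x => f x * g x + (f₂ x * g x - f₁ x * g₁ x + f x * g₂ x) + f x ^ 2 / 2 * g x)
      ((f₁ x + f₃ x + f x * f₁ x) * g x + f x * (g₁ x + g₃ x) + f x ^ 2 / 2 * g₁ x) s x :=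
  ((hf.mul hg).add (((hf₂.mul hg).sub (hf₁.mul hg₁)).add (hf.mul hg₂))
    |>.add (((hf.pow 2).div_const 2).mul hg)).congr_deriv
    (by simp only [Pi.pow_apply]; push_cast; ring)

theorem integral_mul_add_mul_eq_of_kdv {a b : ℝ} (hab : a ≤ b) {u v : ℝ → ℝ}
    (hf : ∀ x ∈ Icc a b, HasDerivWithinAt f (f₁ x) (Icc a b) x)
    (hf₁ : ∀ x ∈ Icc a b, HasDerivWithinAt f₁ (f₂ x) (Icc a b) x)
    (hf₂ : ∀ x ∈ Icc a b, HasDerivWithinAt f₂ (f₃ x) (Icc a b) x)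
    (hg : ∀ x ∈ Icc a b, HasDerivWithinAt g (g₁ x) (Icc a b) x)
    (hg₁ : ∀ x ∈ Icc a b, HasDerivWithinAt g₁ (g₂ x) (Icc a b) x)
    (hg₂ : ∀ x ∈ Icc a b, HasDerivWithinAt g₂ (g₃ x) (Icc a b) x)
    (hu : ContinuousOn u (Icc a b)) (hv : ContinuousOn v (Icc a b))
    (hfu : ∀ x ∈ Icc a b, u x + f₁ x + f₃ x + f x * f₁ x = 0)
    (hgv : ∀ x ∈ Icc a b, v x + g₁ x + g₃ x = 0)
    (hfa : f a = 0) (hfb : f b = 0) (hga : g a = 0) (hgb : g b = 0)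
    (hg₁a : g₁ a = 0) (hg₁b : g₁ b = 0) :
    ∫ x in a..b, u x * g x + f x * v x = 1 / 2 * ∫ x in a..b, f x ^ 2 * g₁ x := by
  have hfc : ContinuousOn f (Icc a b) := fun x hx => (hf x hx).continuousWithinAt
  have hgc : ContinuousOn g (Icc a b) := fun x hx => (hg x hx).continuousWithinAt
  have hg₁c : ContinuousOn g₁ (Icc a b) := fun x hx => (hg₁ x hx).continuousWithinAt
  have hflux : ∀ x ∈ Icc a b, HasDerivWithinAt
      (fun x => -(f x * g x + (f₂ x * g x - f₁ x * g₁ x + f x * g₂ x) + f x ^ 2 / 2 * g x))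
      (u x * g x + f x * v x - 1 / 2 * (f x ^ 2 * g₁ x)) (Icc a b) x := fun x hx =>
    (hasDerivWithinAt_kdv_flux (hf x hx) (hf₁ x hx) (hf₂ x hx) (hg x hx) (hg₁ x hx)
      (hg₂ x hx)).neg.congr_deriv (by linear_combination -g x * hfu x hx - f x * hgv x hx)
  have hint : IntervalIntegrable (fun x => u x * g x + f x * v x) volume a b :=
    ((hu.mul hgc).add (hfc.mul hv)).intervalIntegrable_of_Icc hab
  have hint' : IntervalIntegrable (fun x => f x ^ 2 * g₁ x) volume a b :=
    ((hfc.pow 2).mul hg₁c).intervalIntegrable_of_Icc hab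
  have hzero := intervalIntegral.integral_eq_sub_of_hasDerivWithinAt_of_le hab hflux
    (hint.sub (hint'.const_mul _))
  rw [intervalIntegral.integral_sub hint (hint'.const_mul _),
    intervalIntegral.integral_const_mul] at hzero
  simp only [hfa, hfb, hga, hgb, hg₁a, hg₁b] at hzero
  linarith

end KdVPairing

theorem stmt17_general (L T : ℝ) (hL : 0 < L) (hT : 0 < T)
    (y yt yx yxx yxxx Ψ Ψt Ψx Ψxx Ψxxx : ℝ → ℝ → ℝ)
    -- joint continuity of y and its partial derivatives
    (hycont : ContinuousOn (fun q : ℝ × ℝ => y q.1 q.2) (Icc 0 T ×ˢ Icc 0 L))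
    (hytcont : ContinuousOn (fun q : ℝ × ℝ => yt q.1 q.2) (Icc 0 T ×ˢ Icc 0 L))
    -- y is C¹ in t and C³ in x on [0,T] × [0,L]
    (hyt : ∀ t ∈ Icc 0 T, ∀ x ∈ Icc 0 L, HasDerivWithinAt (fun s => y s x) (yt t x) (Icc 0 T) t)
    (hyx : ∀ t ∈ Icc 0 T, ∀ x ∈ Icc 0 L, HasDerivWithinAt (y t) (yx t x) (Icc 0 L) x)
    (hyxx : ∀ t ∈ Icc 0 T, ∀ x ∈ Icc 0 L, HasDerivWithinAt (yx t) (yxx t x) (Icc 0 L) x)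
    (hyxxx : ∀ t ∈ Icc 0 T, ∀ x ∈ Icc 0 L, HasDerivWithinAt (yxx t) (yxxx t x) (Icc 0 L) x)
    -- y solves the nonlinear KdV equation with Dirichlet boundary conditions
    (hyKdV : ∀ t ∈ Icc 0 T, ∀ x ∈ Icc 0 L,
      yt t x + yx t x + yxxx t x + y t x * yx t x = 0)
    (hybd : ∀ t ∈ Icc 0 T, y t 0 = 0 ∧ y t L = 0)
    -- joint continuity of Ψ and its partial derivatives
    (hΨcont : ContinuousOn (fun q : ℝ × ℝ => Ψ q.1 q.2) (Icc 0 T ×ˢ Icc 0 L))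
    (hΨtcont : ContinuousOn (fun q : ℝ × ℝ => Ψt q.1 q.2) (Icc 0 T ×ˢ Icc 0 L))
    -- Ψ is C¹ in t and C³ in x on [0,T] × [0,L]
    (hΨt : ∀ t ∈ Icc 0 T, ∀ x ∈ Icc 0 L, HasDerivWithinAt (fun s => Ψ s x) (Ψt t x) (Icc 0 T) t)
    (hΨx : ∀ t ∈ Icc 0 T, ∀ x ∈ Icc 0 L, HasDerivWithinAt (Ψ t) (Ψx t x) (Icc 0 L) x)
    (hΨxx : ∀ t ∈ Icc 0 T, ∀ x ∈ Icc 0 L, HasDerivWithinAt (Ψx t) (Ψxx t x) (Icc 0 L) x)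
    (hΨxxx : ∀ t ∈ Icc 0 T, ∀ x ∈ Icc 0 L, HasDerivWithinAt (Ψxx t) (Ψxxx t x) (Icc 0 L) x)
    -- Ψ solves the linear KdV equation with vanishing Dirichlet and Neumann data
    (hΨKdV : ∀ t ∈ Icc 0 T, ∀ x ∈ Icc 0 L, Ψt t x + Ψx t x + Ψxxx t x = 0)
    (hΨbd : ∀ t ∈ Icc 0 T, Ψ t 0 = 0 ∧ Ψ t L = 0 ∧ Ψx t 0 = 0 ∧ Ψx t L = 0) :
    (∫ x in (0:ℝ)..L, y T x * Ψ T x) - (∫ x in (0:ℝ)..L, y 0 x * Ψ 0 x)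
      = (1 / 2) * ∫ t in (0:ℝ)..T, ∫ x in (0:ℝ)..L, (y t x) ^ 2 * Ψx t x := by
  have hT' : (0 : ℝ) ≤ T := hT.le
  have hL' : (0 : ℝ) ≤ L := hL.le
  have hslice : ∀ t ∈ Icc 0 T, IntervalIntegrable (fun x => y t x * Ψ t x) volume 0 L :=
    fun t ht =>
      ((hycont.uncurry_left t ht).mul (hΨcont.uncurry_left t ht)).intervalIntegrable_of_Icc hL'
  calc (∫ x in (0:ℝ)..L, y T x * Ψ T x) - (∫ x in (0:ℝ)..L, y 0 x * Ψ 0 x)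
      = ∫ x in (0:ℝ)..L, (y T x * Ψ T x - y 0 x * Ψ 0 x) :=
        (intervalIntegral.integral_sub (hslice T (right_mem_Icc.2 hT'))
          (hslice 0 (left_mem_Icc.2 hT'))).symm
    _ = ∫ x in (0:ℝ)..L, ∫ t in (0:ℝ)..T, yt t x * Ψ t x + y t x * Ψt t x := by
        refine intervalIntegral.integral_congr fun x hx => ?_
        rw [uIcc_of_le hL'] at hx
        have hI : uIcc 0 T = Icc 0 T := uIcc_of_le hT'
        exact (intervalIntegral.integral_deriv_mul_eq_sub_of_hasDerivWithinAt
          (u := fun s => y s x) (v := fun s => Ψ s x) (hI ▸ fun t ht => hyt t ht x hx)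
          (hI ▸ fun t ht => hΨt t ht x hx)
          ((hytcont.uncurry_right x hx).intervalIntegrable_of_Icc hT')
          ((hΨtcont.uncurry_right x hx).intervalIntegrable_of_Icc hT')).symm
    _ = ∫ t in (0:ℝ)..T, ∫ x in (0:ℝ)..L, yt t x * Ψ t x + y t x * Ψt t x :=
        (intervalIntegral.integral_integral_swap_of_continuousOn
          (f := fun t x => yt t x * Ψ t x + y t x * Ψt t x) hT' hL'
          ((hytcont.mul hΨcont).add (hycont.mul hΨtcont))).symm
    _ = ∫ t in (0:ℝ)..T, 1 / 2 * ∫ x in (0:ℝ)..L, (y t x) ^ 2 * Ψx t x := by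
        refine intervalIntegral.integral_congr fun t ht => ?_
        rw [uIcc_of_le hT'] at ht
        obtain ⟨hy0, hyL⟩ := hybd t ht
        obtain ⟨hΨ0, hΨL, hΨx0, hΨxL⟩ := hΨbd t ht
        exact integral_mul_add_mul_eq_of_kdv hL' (hyx t ht) (hyxx t ht) (hyxxx t ht)
          (hΨx t ht) (hΨxx t ht) (hΨxxx t ht) (hytcont.uncurry_left t ht)
          (hΨtcont.uncurry_left t ht) (fun x hx => by linear_combination hyKdV t ht x hx)
          (hΨKdV t ht) hy0 hyL hΨ0 hΨL hΨx0 hΨxL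
    _ = (1 / 2) * ∫ t in (0:ℝ)..T, ∫ x in (0:ℝ)..L, (y t x) ^ 2 * Ψx t x :=
        intervalIntegral.integral_const_mul _ _

/-- the key quadratic identity obtained by multiplying the nonlinear KdV
equation by a solution `Ψ` of the linear KdV equation with vanishing Dirichlet and
Neumann boundary data, and integrating by parts.  The functions `yt, yx, yxx, yxxx`
(resp. `Ψt, Ψx, Ψxx, Ψxxx`) are the partial derivatives of `y` (resp. `Ψ`), required
to exist on `[0,T] × [0,L]` and to be jointly continuous there. -/
theorem stmt17 (L T : ℝ) (hL : 0 < L) (hT : 0 < T)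
    (y yt yx yxx yxxx Ψ Ψt Ψx Ψxx Ψxxx : ℝ → ℝ → ℝ)
    -- joint continuity of y and its partial derivatives
    (hycont : ContinuousOn (fun q : ℝ × ℝ => y q.1 q.2) (Icc 0 T ×ˢ Icc 0 L))
    (hytcont : ContinuousOn (fun q : ℝ × ℝ => yt q.1 q.2) (Icc 0 T ×ˢ Icc 0 L))
    (hyxcont : ContinuousOn (fun q : ℝ × ℝ => yx q.1 q.2) (Icc 0 T ×ˢ Icc 0 L))
    (hyxxcont : ContinuousOn (fun q : ℝ × ℝ => yxx q.1 q.2) (Icc 0 T ×ˢ Icc 0 L))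
    (hyxxxcont : ContinuousOn (fun q : ℝ × ℝ => yxxx q.1 q.2) (Icc 0 T ×ˢ Icc 0 L))
    -- y is C¹ in t and C³ in x on [0,T] × [0,L]
    (hyt : ∀ t ∈ Icc 0 T, ∀ x ∈ Icc 0 L, HasDerivWithinAt (fun s => y s x) (yt t x) (Icc 0 T) t)
    (hyx : ∀ t ∈ Icc 0 T, ∀ x ∈ Icc 0 L, HasDerivWithinAt (y t) (yx t x) (Icc 0 L) x)
    (hyxx : ∀ t ∈ Icc 0 T, ∀ x ∈ Icc 0 L, HasDerivWithinAt (yx t) (yxx t x) (Icc 0 L) x)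
    (hyxxx : ∀ t ∈ Icc 0 T, ∀ x ∈ Icc 0 L, HasDerivWithinAt (yxx t) (yxxx t x) (Icc 0 L) x)
    -- y solves the nonlinear KdV equation with Dirichlet boundary conditions
    (hyKdV : ∀ t ∈ Icc 0 T, ∀ x ∈ Icc 0 L,
      yt t x + yx t x + yxxx t x + y t x * yx t x = 0)
    (hybd : ∀ t ∈ Icc 0 T, y t 0 = 0 ∧ y t L = 0)
    -- joint continuity of Ψ and its partial derivatives
    (hΨcont : ContinuousOn (fun q : ℝ × ℝ => Ψ q.1 q.2) (Icc 0 T ×ˢ Icc 0 L))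
    (hΨtcont : ContinuousOn (fun q : ℝ × ℝ => Ψt q.1 q.2) (Icc 0 T ×ˢ Icc 0 L))
    (hΨxcont : ContinuousOn (fun q : ℝ × ℝ => Ψx q.1 q.2) (Icc 0 T ×ˢ Icc 0 L))
    (hΨxxcont : ContinuousOn (fun q : ℝ × ℝ => Ψxx q.1 q.2) (Icc 0 T ×ˢ Icc 0 L))
    (hΨxxxcont : ContinuousOn (fun q : ℝ × ℝ => Ψxxx q.1 q.2) (Icc 0 T ×ˢ Icc 0 L))
    -- Ψ is C¹ in t and C³ in x on [0,T] × [0,L]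
    (hΨt : ∀ t ∈ Icc 0 T, ∀ x ∈ Icc 0 L, HasDerivWithinAt (fun s => Ψ s x) (Ψt t x) (Icc 0 T) t)
    (hΨx : ∀ t ∈ Icc 0 T, ∀ x ∈ Icc 0 L, HasDerivWithinAt (Ψ t) (Ψx t x) (Icc 0 L) x)
    (hΨxx : ∀ t ∈ Icc 0 T, ∀ x ∈ Icc 0 L, HasDerivWithinAt (Ψx t) (Ψxx t x) (Icc 0 L) x)
    (hΨxxx : ∀ t ∈ Icc 0 T, ∀ x ∈ Icc 0 L, HasDerivWithinAt (Ψxx t) (Ψxxx t x) (Icc 0 L) x)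
    -- Ψ solves the linear KdV equation with vanishing Dirichlet and Neumann data
    (hΨKdV : ∀ t ∈ Icc 0 T, ∀ x ∈ Icc 0 L, Ψt t x + Ψx t x + Ψxxx t x = 0)
    (hΨbd : ∀ t ∈ Icc 0 T, Ψ t 0 = 0 ∧ Ψ t L = 0 ∧ Ψx t 0 = 0 ∧ Ψx t L = 0) :
    (∫ x in (0:ℝ)..L, y T x * Ψ T x) - (∫ x in (0:ℝ)..L, y 0 x * Ψ 0 x)
      = (1 / 2) * ∫ t in (0:ℝ)..T, ∫ x in (0:ℝ)..L, (y t x) ^ 2 * Ψx t x :=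
  stmt17_general L T hL hT y yt yx yxx yxxx Ψ Ψt Ψx Ψxx Ψxxx hycont hytcont hyt hyx hyxx hyxxx hyKdV
    hybd hΨcont hΨtcont hΨt hΨx hΨxx hΨxxx hΨKdV hΨbd
end
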